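/- arXiv:2604.25341 — 10 statements merged into one kernel-verified Lean document; each statement's English description precedes it below -/
import Mathlib

section
/- For every tree T of order n ≥ 3, irr(T) > n · Var(T). -/
open Finset
open scoped Classical

noncomputable section

variable {V : Type*}

/-- Albertson irregularity: `∑_{uv ∈ E} |d(u) - d(v)|` (as an integer). -/
def irr [Fintype V] (G : SimpleGraph V) : ℤ :=
  ∑ e ∈ G.edgeFinset,
    Sym2.lift ⟨fun u v => |(G.degree u : ℤ) - (G.degree v : ℤ)|,
      fun u v => by simp only []; rw [abs_sub_comm]⟩ e

/-- `σ(G) = ∑_{uv ∈ E} (d(u) - d(v))²`. -/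
def sigmaE [Fintype V] (G : SimpleGraph V) : ℤ :=
  ∑ e ∈ G.edgeFinset,
    Sym2.lift ⟨fun u v => ((G.degree u : ℤ) - (G.degree v : ℤ)) ^ 2,
      fun u v => by simp only []; ring⟩ e

/-- `σ_t(G) = ∑_{{u,v} ⊆ V, u ≠ v} (d(u) - d(v))²`, over unordered pairs of distinct vertices. -/
def sigmaT [Fintype V] (G : SimpleGraph V) : ℤ :=
  ∑ p ∈ (Finset.univ : Finset V).sym2.filter (fun p => ¬ p.IsDiag),
    Sym2.lift ⟨fun u v => ((G.degree u : ℤ) - (G.degree v : ℤ)) ^ 2,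
      fun u v => by simp only []; ring⟩ p

/-- Degree variance `Var(G) = (1/n) ∑_v (d(v) - 2m/n)²`. -/
def degVar [Fintype V] (G : SimpleGraph V) : ℝ :=
  (∑ v : V, ((G.degree v : ℝ) - 2 * (G.edgeFinset.card : ℝ) / (Fintype.card V : ℝ)) ^ 2) /
    (Fintype.card V : ℝ)

end

namespace IrrAux

open SimpleGraph

variable {V : Type*}

/-- In a path, at most one edge contains the final endpoint. -/
lemma last_edge_eq {G : SimpleGraph V} {a b : V} (p : G.Walk a b) :
    p.IsPath → ∀ e₁ ∈ p.edges, ∀ e₂ ∈ p.edges, b ∈ e₁ → b ∈ e₂ → e₁ = e₂ := by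
  induction p with
  | nil => intro _ e₁ h1 _ _ _ _; simp at h1
  | @cons u v w h q ih =>
    intro hp e₁ h1 e₂ h2 hb1 hb2
    rw [SimpleGraph.Walk.cons_isPath_iff] at hp
    rw [SimpleGraph.Walk.edges_cons, List.mem_cons] at h1 h2
    have hwu : w ≠ u := fun hwu => hp.2 (hwu ▸ q.end_mem_support)
    have hnil : ∀ e : Sym2 V, e = s(u, v) → w ∈ e → q.edges = [] := by
      rintro e rfl he
      rcases Sym2.mem_iff.mp he with h' | h'
      · exact absurd h' hwu
      · subst h'
        rw [(SimpleGraph.Walk.isPath_iff_eq_nil (p := q)).mp hp.1]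
        rfl
    rcases h1 with rfl | h1
    · rcases h2 with rfl | h2
      · rfl
      · rw [hnil _ rfl hb1] at h2; exact absurd h2 List.not_mem_nil
    · rcases h2 with rfl | h2
      · rw [hnil _ rfl hb2] at h1; exact absurd h1 List.not_mem_nil
      · exact ih hp.1 e₁ h1 e₂ h2 hb1 hb2

variable [Fintype V]

/-- Sum over darts of an edge function equals twice the sum over edges. -/
lemma sum_dart_edge (G : SimpleGraph V) (F : Sym2 V → ℤ) :
    ∑ d : G.Dart, F d.edge = ∑ e ∈ G.edgeFinset, 2 * F e := by
  classical
  rw [← Finset.sum_fiberwise_of_maps_to (g := SimpleGraph.Dart.edge) (t := G.edgeFinset)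
      (fun d _ => by simp [SimpleGraph.mem_edgeFinset]) (fun d : G.Dart => F d.edge)]
  refine Finset.sum_congr rfl fun e he => ?_
  rw [Finset.sum_congr rfl (fun d hd => congrArg F (Finset.mem_filter.mp hd).2),
    Finset.sum_const]
  have hc : #{d : G.Dart | d.edge = e} = 2 :=
    G.dart_edge_fiber_card e (SimpleGraph.mem_edgeFinset.mp he)
  have : (Finset.univ.filter fun d : G.Dart => d.edge = e).card = 2 := by
    convert hc using 2
  rw [this]
  simp [two_mul]

lemma sum_dart_fst (G : SimpleGraph V) (f : V → ℤ) :
    ∑ d : G.Dart, f d.fst = ∑ v, (G.degree v : ℤ) * f v := by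
  classical
  rw [← Finset.sum_fiberwise_of_maps_to (g := fun d : G.Dart => d.fst) (t := Finset.univ)
      (fun d _ => Finset.mem_univ _) (fun d : G.Dart => f d.fst)]
  refine Finset.sum_congr rfl fun v _ => ?_
  rw [Finset.sum_congr rfl (fun d hd => congrArg f (Finset.mem_filter.mp hd).2),
    Finset.sum_const]
  have hc : #{d : G.Dart | d.fst = v} = G.degree v := G.dart_fst_fiber_card_eq_degree v
  have : (Finset.univ.filter fun d : G.Dart => d.fst = v).card = G.degree v := by
    convert hc using 2
  rw [this]
  simp [nsmul_eq_mul]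

/-- `∑_{uv ∈ E} (d(u)+d(v)) = ∑_v d(v)²`. -/
lemma sum_add_deg (G : SimpleGraph V) :
    ∑ e ∈ G.edgeFinset,
      Sym2.lift ⟨fun u v => (G.degree u : ℤ) + (G.degree v : ℤ),
        fun u v => by simp only []; ring⟩ e
      = ∑ v, (G.degree v : ℤ) * G.degree v := by
  classical
  have key := sum_dart_edge G (Sym2.lift ⟨fun u v => (G.degree u : ℤ) + (G.degree v : ℤ),
    fun u v => by simp only []; ring⟩)
  have h1 : ∀ d : G.Dart,
      Sym2.lift ⟨fun u v => (G.degree u : ℤ) + (G.degree v : ℤ),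
        fun u v => by simp only []; ring⟩ d.edge
      = (G.degree d.fst : ℤ) + (G.degree d.snd : ℤ) := by
    intro d
    have : d.edge = s(d.fst, d.snd) := rfl
    rw [this, Sym2.lift_mk]
  rw [Finset.sum_congr rfl (fun d _ => h1 d)] at key
  rw [Finset.sum_add_distrib] at key
  have h2 : ∑ d : G.Dart, (G.degree d.snd : ℤ) = ∑ d : G.Dart, (G.degree d.fst : ℤ) := by
    refine Fintype.sum_bijective (fun d : G.Dart => d.symm)
      (SimpleGraph.Dart.symm_involutive.bijective) _ _ (fun d => ?_)
    rfl
  rw [h2, sum_dart_fst G (fun v => (G.degree v : ℤ))] at key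
  have h3 : ∑ e ∈ G.edgeFinset, (2 : ℤ) *
      Sym2.lift ⟨fun u v => (G.degree u : ℤ) + (G.degree v : ℤ),
        fun u v => by simp only []; ring⟩ e
      = 2 * ∑ e ∈ G.edgeFinset,
      Sym2.lift ⟨fun u v => (G.degree u : ℤ) + (G.degree v : ℤ),
        fun u v => by simp only []; ring⟩ e := by
    rw [Finset.mul_sum]
  rw [h3] at key
  linarith [key]

set_option maxHeartbeats 1000000 in
/-- In a tree on at least 3 vertices, the sum over edges of the minimum degree of the
two endpoints is at most `2m - 2`. -/
lemma min_sum_le (G : SimpleGraph V) (hT : G.IsTree) (hn : 3 ≤ Fintype.card V) :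
    ∑ e ∈ G.edgeFinset,
      Sym2.lift ⟨fun u v => min (G.degree u : ℤ) (G.degree v : ℤ),
        fun u v => by simp only []; rw [min_comm]⟩ e
      ≤ 2 * (G.edgeFinset.card : ℤ) - 2 := by
  classical
  obtain ⟨r, hr⟩ : ∃ r, 2 ≤ G.degree r := by
    by_contra hc
    push_neg at hc
    have h1 : ∀ v, G.degree v ≤ 1 := fun v => by have := hc v; omega
    have hsum : ∑ v, G.degree v = 2 * G.edgeFinset.card := G.sum_degrees_eq_twice_card_edges
    have hm : G.edgeFinset.card + 1 = Fintype.card V := hT.card_edgeFinset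
    have hle : ∑ v, G.degree v ≤ Fintype.card V := by
      calc ∑ v, G.degree v ≤ ∑ _v : V, 1 := Finset.sum_le_sum (fun v _ => h1 v)
        _ = Fintype.card V := by simp
    omega
  -- choose a path from `r` to each vertex
  have P : ∀ v : V, G.Path r v := fun v => ((hT.isConnected.preconnected r v).some.toPath)
  -- every edge lies on the chosen path to one of its endpoints
  have hexists : ∀ u v, G.Adj u v →
      s(u,v) ∈ (P u : G.Walk r u).edges ∨ s(u,v) ∈ (P v : G.Walk r v).edges := by
    intro u v huv
    have hb : G.IsBridge s(u,v) :=
      (SimpleGraph.isAcyclic_iff_forall_adj_isBridge.mp hT.2) huv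
    rw [SimpleGraph.isBridge_iff_adj_and_forall_walk_mem_edges] at hb
    have h := hb ((P u : G.Walk r u).reverse.append (P v : G.Walk r v))
    rw [SimpleGraph.Walk.edges_append, List.mem_append, SimpleGraph.Walk.edges_reverse,
      List.mem_reverse] at h
    exact h
  have hspec : ∀ e ∈ G.edgeFinset, ∃ w, w ∈ e ∧ e ∈ (P w : G.Walk r w).edges := by
    intro e
    induction e using Sym2.ind with
    | _ u v =>
      intro he
      have huv : G.Adj u v := G.mem_edgeSet.mp (SimpleGraph.mem_edgeFinset.mp he)
      rcases hexists u v huv with h | h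
      · exact ⟨u, Sym2.mem_mk_left u v, h⟩
      · exact ⟨v, Sym2.mem_mk_right u v, h⟩
  set f : Sym2 V → V := fun e =>
    if h : ∃ w, w ∈ e ∧ e ∈ (P w : G.Walk r w).edges then h.choose else r with hf
  have hmem : ∀ e ∈ G.edgeFinset, f e ∈ e ∧ e ∈ (P (f e) : G.Walk r (f e)).edges := by
    intro e he
    have h := hspec e he
    have hfe : f e = h.choose := by simp only [hf]; rw [dif_pos h]
    rw [hfe]
    exact h.choose_spec
  have hner : ∀ e ∈ G.edgeFinset, f e ≠ r := by
    intro e he hfe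
    have h2 := (hmem e he).2
    rw [hfe] at h2
    have hnil : (P r : G.Walk r r) = SimpleGraph.Walk.nil :=
      (SimpleGraph.Walk.isPath_iff_eq_nil (p := (P r : G.Walk r r))).mp (P r).2
    rw [hnil] at h2
    simp at h2
  have hinj : ∀ e₁ ∈ G.edgeFinset, ∀ e₂ ∈ G.edgeFinset, f e₁ = f e₂ → e₁ = e₂ := by
    intro e₁ h1 e₂ h2 heq
    have m1 := hmem e₁ h1
    have m2 := hmem e₂ h2
    rw [heq] at m1
    exact last_edge_eq (P (f e₂) : G.Walk r (f e₂)) (P (f e₂)).2 e₁ m1.2 e₂ m2.2 m1.1 m2.1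
  have hle : ∀ e ∈ G.edgeFinset,
      Sym2.lift ⟨fun u v => min (G.degree u : ℤ) (G.degree v : ℤ),
        fun u v => by simp only []; rw [min_comm]⟩ e ≤ (G.degree (f e) : ℤ) := by
    intro e
    induction e using Sym2.ind with
    | _ u v =>
      intro he
      have hm := (hmem _ he).1
      rw [Sym2.lift_mk]
      rcases Sym2.mem_iff.mp hm with h | h <;> rw [h]
      · exact min_le_left _ _
      · exact min_le_right _ _
  have hsub : G.edgeFinset.image f ⊆ Finset.univ.erase r := by
    intro v hv
    rcases Finset.mem_image.mp hv with ⟨e, he, rfl⟩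
    exact Finset.mem_erase.mpr ⟨hner e he, Finset.mem_univ _⟩
  have hdegsum : (∑ v, (G.degree v : ℤ)) = 2 * (G.edgeFinset.card : ℤ) := by
    exact_mod_cast congrArg (fun k : ℕ => (k : ℤ)) G.sum_degrees_eq_twice_card_edges
  calc ∑ e ∈ G.edgeFinset,
      Sym2.lift ⟨fun u v => min (G.degree u : ℤ) (G.degree v : ℤ),
        fun u v => by simp only []; rw [min_comm]⟩ e
      ≤ ∑ e ∈ G.edgeFinset, (G.degree (f e) : ℤ) := Finset.sum_le_sum hle
    _ = ∑ v ∈ G.edgeFinset.image f, (G.degree v : ℤ) := (Finset.sum_image (f := fun v => (G.degree v : ℤ)) hinj).symm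
    _ ≤ ∑ v ∈ Finset.univ.erase r, (G.degree v : ℤ) :=
        Finset.sum_le_sum_of_subset_of_nonneg hsub (fun v _ _ => by positivity)
    _ = (∑ v, (G.degree v : ℤ)) - G.degree r := by
        rw [Finset.sum_erase_eq_sub (Finset.mem_univ r)]
    _ = 2 * (G.edgeFinset.card : ℤ) - G.degree r := by rw [hdegsum]
    _ ≤ 2 * (G.edgeFinset.card : ℤ) - 2 := by
        have : (2 : ℤ) ≤ (G.degree r : ℤ) := by exact_mod_cast hr
        linarith

/-- The key integer inequality: `irr(T) ≥ ∑ d² - 4m + 4`. -/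
lemma key_int (G : SimpleGraph V) (hT : G.IsTree) (hn : 3 ≤ Fintype.card V) :
    (∑ v, (G.degree v : ℤ) * G.degree v) - 4 * (G.edgeFinset.card : ℤ) + 4 ≤ irr G := by
  classical
  have per : ∀ e : Sym2 V,
      Sym2.lift ⟨fun u v => |(G.degree u : ℤ) - (G.degree v : ℤ)|,
        fun u v => by simp only []; rw [abs_sub_comm]⟩ e
      = Sym2.lift ⟨fun u v => (G.degree u : ℤ) + (G.degree v : ℤ),
        fun u v => by simp only []; ring⟩ e
        - 2 * Sym2.lift ⟨fun u v => min (G.degree u : ℤ) (G.degree v : ℤ),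
        fun u v => by simp only []; rw [min_comm]⟩ e := by
    intro e
    induction e using Sym2.ind with
    | _ u v =>
      simp only [Sym2.lift_mk]
      rcases le_total (G.degree u : ℤ) (G.degree v : ℤ) with h | h
      · rw [abs_of_nonpos (by linarith), min_eq_left h]; ring
      · rw [abs_of_nonneg (by linarith), min_eq_right h]; ring
  have hsplit : irr G
      = (∑ e ∈ G.edgeFinset,
          Sym2.lift ⟨fun u v => (G.degree u : ℤ) + (G.degree v : ℤ),
            fun u v => by simp only []; ring⟩ e)
        - 2 * ∑ e ∈ G.edgeFinset,
          Sym2.lift ⟨fun u v => min (G.degree u : ℤ) (G.degree v : ℤ),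
            fun u v => by simp only []; rw [min_comm]⟩ e := by
    rw [irr, Finset.mul_sum, ← Finset.sum_sub_distrib]
    exact Finset.sum_congr rfl (fun e _ => per e)
  rw [hsplit, sum_add_deg G]
  have := min_sum_le G hT hn
  linarith

end IrrAux

/-- For every tree `T` of order `n ≥ 3`, `irr(T) > n · Var(T)`. -/
theorem stmt0 {V : Type*} [Fintype V] (G : SimpleGraph V) (hT : G.IsTree)
    (hn : 3 ≤ Fintype.card V) :
    (irr G : ℝ) > (Fintype.card V : ℝ) * degVar G := by
  classical
  have hm : G.edgeFinset.card + 1 = Fintype.card V := hT.card_edgeFinset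
  have hirr := IrrAux.key_int G hT hn
  set N : ℝ := (Fintype.card V : ℝ) with hN
  set M : ℝ := (G.edgeFinset.card : ℝ) with hM
  have hNM : N = M + 1 := by rw [hN, hM]; exact_mod_cast hm.symm
  have hNpos : (0:ℝ) < N := by
    rw [hN]; exact_mod_cast lt_of_lt_of_le (by norm_num) hn
  have hMnn : (0:ℝ) ≤ M := by rw [hM]; positivity
  set S : ℝ := ∑ v, (G.degree v : ℝ) ^ 2 with hS
  have hDsum : ∑ v, (G.degree v : ℝ) = 2 * M := by
    rw [hM]
    exact_mod_cast congrArg (fun k : ℕ => (k : ℝ)) G.sum_degrees_eq_twice_card_edges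
  have hvar : N * degVar G = S - 4 * M ^ 2 / N := by
    rw [degVar, mul_div_cancel₀ _ (ne_of_gt hNpos)]
    have hexp : ∀ v : V, ((G.degree v : ℝ) - 2 * M / N) ^ 2
        = (G.degree v : ℝ) ^ 2 - (2 * (2 * M / N)) * (G.degree v : ℝ) + (2 * M / N) ^ 2 := by
      intro v; ring
    rw [Finset.sum_congr rfl (fun v _ => hexp v)]
    rw [Finset.sum_add_distrib, Finset.sum_sub_distrib, ← Finset.mul_sum, hDsum,
      Finset.sum_const, Finset.card_univ]
    rw [nsmul_eq_mul, ← hS, ← hN]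
    field_simp
    ring
  have hcast : ((∑ v, (G.degree v : ℤ) * G.degree v : ℤ) : ℝ) = S := by
    rw [hS]; push_cast; exact Finset.sum_congr rfl (fun v _ => by ring)
  have hirrR : S - 4 * M + 4 ≤ (irr G : ℝ) := by
    have h0 : ((∑ v, (G.degree v : ℤ) * G.degree v - 4 * (G.edgeFinset.card : ℤ) + 4 : ℤ) : ℝ)
        ≤ ((irr G : ℤ) : ℝ) := Int.cast_le.mpr hirr
    push_cast at h0
    have hSS : S = ∑ v, (G.degree v : ℝ) * G.degree v := by
      rw [hS]; exact Finset.sum_congr rfl (fun v _ => by ring)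
    rw [hSS, hM]
    exact h0
  have hlt : S - 4 * M ^ 2 / N < S - 4 * M + 4 := by
    have h1 : 4 * M - 4 < 4 * M ^ 2 / N := by
      rw [lt_div_iff₀ hNpos, hNM]
      nlinarith
    linarith
  rw [gt_iff_lt, hvar]
  linarith
end

section
/- For every tree T = (V,E) of order at least 3 with maximum degree Δ(T), one has ∑_{uv ∈ E} |d(u) − d(v)| ≥ ∑_{v ∈ V} (d(v) − 2)² + 2(Δ(T) − 2). -/
open Finset
open scoped Classical

namespace Stmt4Aux

open SimpleGraph Walk

variable {V : Type*}

noncomputable def pathTo {G : SimpleGraph V} (hT : G.IsTree) (v w : V) : G.Walk v w :=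
  (hT.existsUnique_path v w).choose

lemma pathTo_isPath {G : SimpleGraph V} (hT : G.IsTree) (v w : V) :
    (pathTo hT v w).IsPath := (hT.existsUnique_path v w).choose_spec.1

lemma pathTo_eq {G : SimpleGraph V} (hT : G.IsTree) {v w : V} (p : G.Walk v w)
    (hp : p.IsPath) : p = pathTo hT v w :=
  (hT.existsUnique_path v w).choose_spec.2 p hp

/-- parent-edge map -/
noncomputable def pedge {G : SimpleGraph V} (hT : G.IsTree) (w v : V) : Sym2 V :=
  s(v, (pathTo hT v w).getVert 1)

lemma pedge_surj {G : SimpleGraph V} (hT : G.IsTree) (w : V) {u v : V} (h : G.Adj u v) :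
    ∃ x, x ≠ w ∧ pedge hT w x = s(u, v) := by
  set q := pathTo hT v w with hqdef
  have hq : q.IsPath := pathTo_isPath hT v w
  by_cases hu : u ∈ q.support
  · have hvw : v ≠ w := by
      rintro rfl
      have hnil : (Walk.nil : G.Walk v v) = q := pathTo_eq hT _ Walk.IsPath.nil
      rw [← hnil] at hu
      simp only [Walk.support_nil, List.mem_singleton] at hu
      exact h.ne hu
    refine ⟨v, hvw, ?_⟩
    have hq2 : (q.dropUntil u hu).IsPath := hq.dropUntil hu
    have hv2 : v ∉ (q.dropUntil u hu).support := by
      intro hv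
      have hnd : ((q.takeUntil u hu).append (q.dropUntil u hu)).support.Nodup := by
        rw [Walk.take_spec]; exact hq.support_nodup
      rw [Walk.support_append, List.nodup_append] at hnd
      have hdisj := hnd.2.2
      have hvtake : v ∈ (q.takeUntil u hu).support := Walk.start_mem_support _
      have hvtail : v ∈ (q.dropUntil u hu).support.tail := by
        have hc := Walk.support_eq_cons (q.dropUntil u hu)
        rw [hc] at hv
        rcases List.mem_cons.mp hv with h1 | h1
        · exact absurd h1 h.ne'
        · exact h1
      exact hdisj v hvtake v hvtail rfl
    have hpath : (Walk.cons h.symm (q.dropUntil u hu)).IsPath := hq2.cons hv2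
    have heq := pathTo_eq hT _ hpath
    rw [pedge, ← heq, Walk.getVert_cons_succ, Walk.getVert_zero]
    exact Sym2.eq_swap
  · have huw : u ≠ w := by
      rintro rfl
      exact hu q.end_mem_support
    refine ⟨u, huw, ?_⟩
    have hpath : (Walk.cons h q).IsPath := hq.cons hu
    have heq := pathTo_eq hT _ hpath
    rw [pedge, ← heq, Walk.getVert_cons_succ, Walk.getVert_zero]

lemma sum_image_le' {α β : Type*} [DecidableEq β] (s : Finset α) (f : α → β) (g : β → ℤ)
    (hg : ∀ b, 0 ≤ g b) :
    ∑ b ∈ s.image f, g b ≤ ∑ a ∈ s, g (f a) := by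
  conv_rhs => rw [Finset.sum_comp g f]
  apply Finset.sum_le_sum
  intro b hb
  obtain ⟨a, ha, hab⟩ := Finset.mem_image.mp hb
  have hcard : 1 ≤ (s.filter (fun x => f x = b)).card :=
    Finset.card_pos.mpr ⟨a, Finset.mem_filter.mpr ⟨ha, hab⟩⟩
  rw [nsmul_eq_mul]
  exact le_mul_of_one_le_left (hg b) (by exact_mod_cast hcard)

end Stmt4Aux

lemma sum_edge_deg {V : Type*} [Fintype V] (G : SimpleGraph V) :
    ∑ e ∈ G.edgeFinset,
      Sym2.lift ⟨fun a b => (G.degree a : ℤ) + (G.degree b : ℤ),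
        fun a b => by simp [add_comm]⟩ e
      = ∑ v : V, (G.degree v : ℤ) ^ 2 := by
  classical
  have h1 : ∀ e ∈ G.edgeFinset,
      Sym2.lift (⟨fun a b => (G.degree a : ℤ) + (G.degree b : ℤ),
        fun a b => by simp [add_comm]⟩ :
          { f : V → V → ℤ // ∀ a₁ a₂, f a₁ a₂ = f a₂ a₁ }) e
      = ∑ v : V, if v ∈ e then (G.degree v : ℤ) else 0 := by
    intro e he
    revert he
    refine Sym2.inductionOn e ?_
    intro a b he
    have hab : a ≠ b := by
      have hd := (SimpleGraph.mem_edgeFinset.mp he)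
      have := G.not_isDiag_of_mem_edgeSet hd
      simpa using this
    rw [Sym2.lift_mk, ← Finset.sum_filter]
    have hfil : Finset.univ.filter (fun v => v ∈ s(a, b)) = {a, b} := by
      ext x; simp [Sym2.mem_iff]
    rw [hfil, Finset.sum_pair hab]
  rw [Finset.sum_congr rfl h1, Finset.sum_comm]
  refine Finset.sum_congr rfl fun v _ => ?_
  rw [← Finset.sum_filter, ← SimpleGraph.incidenceFinset_eq_filter, Finset.sum_const,
    SimpleGraph.card_incidenceFinset_eq_degree, nsmul_eq_mul]
  ring


/-- For every tree `T = (V,E)` of order at least `3`,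
`∑_{uv ∈ E} |d(u) - d(v)| ≥ ∑_{v ∈ V} (d(v) - 2)² + 2(Δ(T) - 2)`. -/
theorem stmt4 {V : Type*} [Fintype V] (G : SimpleGraph V) (hT : G.IsTree)
    (hn : 3 ≤ Fintype.card V) :
    irr G ≥ (∑ v : V, ((G.degree v : ℤ) - 2) ^ 2) + 2 * ((G.maxDegree : ℤ) - 2) := by
  classical
  have hne : Nonempty V := Fintype.card_pos_iff.mp (by omega)
  obtain ⟨w, hw⟩ := G.exists_maximal_degree_vertex
  set m : Sym2 V → ℤ := Sym2.lift ⟨fun a b => min (G.degree a : ℤ) (G.degree b : ℤ),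
    fun a b => by simp [min_comm]⟩ with hm
  have hm_nonneg : ∀ e, 0 ≤ m e := by
    intro e
    refine Sym2.inductionOn e ?_
    intro a b
    simp only [hm, Sym2.lift_mk, le_min_iff]
    exact ⟨Int.ofNat_nonneg _, Int.ofNat_nonneg _⟩
  have hirr : irr G = (∑ v : V, (G.degree v : ℤ) ^ 2) - 2 * ∑ e ∈ G.edgeFinset, m e := by
    have hpt : ∀ e ∈ G.edgeFinset,
        Sym2.lift (⟨fun u v => |(G.degree u : ℤ) - (G.degree v : ℤ)|,
          fun u v => by simp only []; rw [abs_sub_comm]⟩ :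
            { f : V → V → ℤ // ∀ a₁ a₂, f a₁ a₂ = f a₂ a₁ }) e
        = Sym2.lift (⟨fun a b => (G.degree a : ℤ) + (G.degree b : ℤ),
            fun a b => by simp [add_comm]⟩ :
            { f : V → V → ℤ // ∀ a₁ a₂, f a₁ a₂ = f a₂ a₁ }) e - 2 * m e := by
      intro e _
      refine Sym2.inductionOn e ?_
      intro a b
      simp only [hm, Sym2.lift_mk]
      rcases le_total ((G.degree a : ℤ)) ((G.degree b : ℤ)) with h | h
      · rw [abs_of_nonpos (by linarith), min_eq_left h]; ring
      · rw [abs_of_nonneg (by linarith), min_eq_right h]; ring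
    rw [irr, Finset.sum_congr rfl hpt, Finset.sum_sub_distrib, sum_edge_deg,
      ← Finset.mul_sum]
  have hSbound : ∑ e ∈ G.edgeFinset, m e ≤ (∑ v : V, (G.degree v : ℤ)) - (G.degree w : ℤ) := by
    have hsubset : G.edgeFinset ⊆ (Finset.univ.erase w).image (Stmt4Aux.pedge hT w) := by
      intro e he
      have hex : ∃ x, x ≠ w ∧ Stmt4Aux.pedge hT w x = e := by
        revert he
        refine Sym2.inductionOn e ?_
        intro a b he
        exact Stmt4Aux.pedge_surj hT w
          ((SimpleGraph.mem_edgeSet G).mp (SimpleGraph.mem_edgeFinset.mp he))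
      obtain ⟨x, hxw, hx⟩ := hex
      exact Finset.mem_image.mpr ⟨x, Finset.mem_erase.mpr ⟨hxw, Finset.mem_univ x⟩, hx⟩
    calc ∑ e ∈ G.edgeFinset, m e
        ≤ ∑ e ∈ (Finset.univ.erase w).image (Stmt4Aux.pedge hT w), m e :=
          Finset.sum_le_sum_of_subset_of_nonneg hsubset (fun e _ _ => hm_nonneg e)
      _ ≤ ∑ v ∈ Finset.univ.erase w, m (Stmt4Aux.pedge hT w v) :=
          Stmt4Aux.sum_image_le' _ _ _ hm_nonneg
      _ ≤ ∑ v ∈ Finset.univ.erase w, (G.degree v : ℤ) := by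
          refine Finset.sum_le_sum fun v _ => ?_
          simp only [hm, Stmt4Aux.pedge, Sym2.lift_mk]
          exact min_le_left _ _
      _ = (∑ v : V, (G.degree v : ℤ)) - (G.degree w : ℤ) :=
          Finset.sum_erase_eq_sub (Finset.mem_univ w)
  have hds : (∑ v : V, (G.degree v : ℤ)) = 2 * (Fintype.card V : ℤ) - 2 := by
    have h1 := G.sum_degrees_eq_twice_card_edges
    have h2 : (G.edgeFinset.card : ℤ) + 1 = (Fintype.card V : ℤ) := by
      exact_mod_cast hT.card_edgeFinset
    have h1' : (∑ v : V, (G.degree v : ℤ)) = 2 * (G.edgeFinset.card : ℤ) := by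
      exact_mod_cast h1
    rw [h1']; linarith
  have hexp : ∑ v : V, ((G.degree v : ℤ) - 2) ^ 2
      = (∑ v : V, (G.degree v : ℤ) ^ 2) - 4 * (∑ v : V, (G.degree v : ℤ))
        + 4 * (Fintype.card V : ℤ) := by
    have hpt : ∀ v ∈ (Finset.univ : Finset V),
        ((G.degree v : ℤ) - 2) ^ 2 = (G.degree v : ℤ) ^ 2 - 4 * (G.degree v : ℤ) + 4 :=
      fun v _ => by ring
    rw [Finset.sum_congr rfl hpt, Finset.sum_add_distrib, Finset.sum_sub_distrib,
      Finset.sum_const, Finset.card_univ, nsmul_eq_mul, ← Finset.mul_sum]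
    ring
  have hwz : (G.maxDegree : ℤ) = (G.degree w : ℤ) := by exact_mod_cast hw
  rw [ge_iff_le, hirr, hexp, hwz]
  linarith
end

section
/- Let T = (V,E) be a tree of order at least 3 rooted at a vertex r whose degree equals the maximum degree Δ(T), and suppose that for every vertex x and every child y of x (with respect to the root r), d(x) ≥ d(y), where d denotes degree in T. Then ∑_{uv ∈ E} |d(u) − d(v)| = ∑_{v ∈ V} (d(v) − 2)² + 2(Δ(T) − 2). -/
open Finset
open scoped Classical

section Aux
open SimpleGraph Finset
open scoped Classical

variable {V : Type*}

private lemma aux_path_concat {G : SimpleGraph V} {a b c : V} {p : G.Walk a b} (hp : p.IsPath)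
    (h : G.Adj b c) (hc : c ∉ p.support) : (p.concat h).IsPath := by
  rw [← SimpleGraph.Walk.isPath_reverse_iff, SimpleGraph.Walk.reverse_concat,
    SimpleGraph.Walk.cons_isPath_iff]
  exact ⟨hp.reverse, by simpa [SimpleGraph.Walk.support_reverse] using hc⟩

private lemma aux_dist_ne {G : SimpleGraph V} (hT : G.IsTree) (r : V) {u v : V}
    (h : G.Adj u v) : G.dist r u ≠ G.dist r v := by
  intro he
  obtain ⟨p, hp, hl⟩ := hT.isConnected.exists_path_of_dist r u
  by_cases hv : v ∈ p.support
  · have h1 : G.dist r v ≤ (p.takeUntil v hv).length := SimpleGraph.dist_le _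
    have h2 : (p.takeUntil v hv).length ≤ p.length := SimpleGraph.Walk.length_takeUntil_le p hv
    have h3 : (p.takeUntil v hv).length + (p.dropUntil v hv).length = p.length := by
      conv_rhs => rw [← SimpleGraph.Walk.take_spec p hv]
      rw [SimpleGraph.Walk.length_append]
    have h4 : (p.dropUntil v hv).length = 0 := by omega
    exact h.ne (SimpleGraph.Walk.eq_of_length_eq_zero h4).symm
  · obtain ⟨p', hp', hl'⟩ := hT.isConnected.exists_path_of_dist r v
    have hq : (p.concat h).IsPath := aux_path_concat hp h hv
    have heq : p.concat h = p' := (hT.existsUnique_path r v).unique hq hp'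
    have hlen := congrArg SimpleGraph.Walk.length heq
    rw [SimpleGraph.Walk.length_concat, hl, hl'] at hlen
    omega

private lemma aux_adj_dist {G : SimpleGraph V} (hT : G.IsTree) (r : V) {u v : V}
    (h : G.Adj u v) :
    G.dist r v = G.dist r u + 1 ∨ G.dist r u = G.dist r v + 1 := by
  have h1 : G.dist r v ≤ G.dist r u + 1 := by
    have t := hT.isConnected.dist_triangle (u := r) (v := u) (w := v)
    rwa [(SimpleGraph.dist_eq_one_iff_adj).mpr h] at t
  have h2 : G.dist r u ≤ G.dist r v + 1 := by
    have t := hT.isConnected.dist_triangle (u := r) (v := v) (w := u)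
    rwa [(SimpleGraph.dist_eq_one_iff_adj).mpr h.symm] at t
  have h3 := aux_dist_ne hT r h
  omega

private lemma aux_parent_unique {G : SimpleGraph V} (hT : G.IsTree) (r : V) {u u' v : V}
    (h : G.Adj u v) (h' : G.Adj u' v)
    (hd : G.dist r u + 1 = G.dist r v) (hd' : G.dist r u' + 1 = G.dist r v) : u = u' := by
  obtain ⟨p, hp, hl⟩ := hT.isConnected.exists_path_of_dist r u
  obtain ⟨p', hp', hl'⟩ := hT.isConnected.exists_path_of_dist r u'
  have hv : v ∉ p.support := by
    intro hv
    have h1 : G.dist r v ≤ (p.takeUntil v hv).length := SimpleGraph.dist_le _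
    have h2 : (p.takeUntil v hv).length ≤ p.length := SimpleGraph.Walk.length_takeUntil_le p hv
    omega
  have hv' : v ∉ p'.support := by
    intro hv'
    have h1 : G.dist r v ≤ (p'.takeUntil v hv').length := SimpleGraph.dist_le _
    have h2 : (p'.takeUntil v hv').length ≤ p'.length :=
      SimpleGraph.Walk.length_takeUntil_le p' hv'
    omega
  have heq : p.concat h = p'.concat h' :=
    (hT.existsUnique_path r v).unique (aux_path_concat hp h hv) (aux_path_concat hp' h' hv')
  obtain ⟨hvv, -⟩ := SimpleGraph.Walk.concat_inj heq
  exact hvv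

private lemma aux_parent_exists {G : SimpleGraph V} (hT : G.IsTree) (r : V) {v : V}
    (hv : v ≠ r) : ∃ u, G.Adj u v ∧ G.dist r u + 1 = G.dist r v := by
  obtain ⟨p, hp, hl⟩ := hT.isConnected.exists_path_of_dist r v
  obtain ⟨w, h, q, hq⟩ := SimpleGraph.Walk.exists_eq_cons_of_ne hv p.reverse
  refine ⟨w, h.symm, ?_⟩
  have hlen : q.length + 1 = G.dist r v := by
    have h0 := congrArg SimpleGraph.Walk.length hq
    rw [SimpleGraph.Walk.length_reverse, SimpleGraph.Walk.length_cons, hl] at h0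
    omega
  have h1 : G.dist r w ≤ q.length := by
    have h0 := SimpleGraph.dist_le q.reverse
    rwa [SimpleGraph.Walk.length_reverse] at h0
  have h2 : G.dist r v ≤ G.dist r w + 1 := by
    have t := hT.isConnected.dist_triangle (u := r) (v := w) (w := v)
    rwa [(SimpleGraph.dist_eq_one_iff_adj).mpr h.symm] at t
  omega

end Aux

/-- For a tree of order at least `3` rooted at a vertex `r` of maximum degree in which the
degree of every vertex is at least the degree of each of its children (a child of `x` being a
neighbour `y` of `x` with `x` on the path from `r` to `y`, i.e., `dist r y = dist r x + 1`),
one has `∑_{uv ∈ E} |d(u) - d(v)| = ∑_{v ∈ V} (d(v) - 2)² + 2(Δ(T) - 2)`. -/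
theorem stmt5 {V : Type*} [Fintype V] (G : SimpleGraph V) (hT : G.IsTree)
    (hn : 3 ≤ Fintype.card V) (r : V) (hr : G.degree r = G.maxDegree)
    (hchild : ∀ x y : V, G.Adj x y → G.dist r y = G.dist r x + 1 →
      G.degree y ≤ G.degree x) :
    irr G = (∑ v : V, ((G.degree v : ℤ) - 2) ^ 2) + 2 * ((G.maxDegree : ℤ) - 2) := by
  classical
  set P : G.Dart → Prop := fun d => G.dist r d.snd = G.dist r d.fst + 1 with hP
  have hsymm1 : ∀ d : G.Dart, d.symm.fst = d.snd := fun d => rfl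
  have hsymm2 : ∀ d : G.Dart, d.symm.snd = d.fst := fun d => rfl
  -- a generic flip of sums between non-P darts and P darts
  have hflip : ∀ (h : G.Dart → ℤ),
      ∑ d ∈ Finset.univ.filter (fun d => ¬ P d), h d
        = ∑ d ∈ Finset.univ.filter P, h d.symm := by
    intro h
    refine Finset.sum_bij' (fun d _ => d.symm) (fun d _ => d.symm) ?_ ?_ ?_ ?_ ?_
    · intro d hd
      simp only [Finset.mem_filter, Finset.mem_univ, true_and, hP] at hd ⊢
      rw [hsymm1, hsymm2]
      rcases aux_adj_dist hT r d.adj with h1 | h1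
      · exact absurd h1 hd
      · exact h1
    · intro d hd
      simp only [Finset.mem_filter, Finset.mem_univ, true_and, hP] at hd ⊢
      rw [hsymm1, hsymm2]
      omega
    · intro d _; exact SimpleGraph.Dart.symm_symm d
    · intro d _; exact SimpleGraph.Dart.symm_symm d
    · intro d _; rw [SimpleGraph.Dart.symm_symm]
  -- 2 * irr G as a sum over darts
  have hirr : 2 * irr G = ∑ d : G.Dart, |(G.degree d.fst : ℤ) - (G.degree d.snd : ℤ)| := by
    have hfib := Finset.sum_fiberwise_of_maps_to' (s := (Finset.univ : Finset G.Dart))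
      (t := G.edgeFinset) (g := SimpleGraph.Dart.edge)
      (f := Sym2.lift ⟨fun u v => |(G.degree u : ℤ) - (G.degree v : ℤ)|,
        fun u v => by simp only []; rw [abs_sub_comm]⟩)
      (fun d _ => SimpleGraph.mem_edgeFinset.mpr d.edge_mem)
    have hval : ∀ d : G.Dart,
        (Sym2.lift ⟨fun u v => |(G.degree u : ℤ) - (G.degree v : ℤ)|,
          fun u v => by simp only []; rw [abs_sub_comm]⟩) d.edge
        = |(G.degree d.fst : ℤ) - (G.degree d.snd : ℤ)| := fun d => rfl
    calc 2 * irr G = ∑ e ∈ G.edgeFinset, 2 * (Sym2.lift ⟨fun u v =>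
          |(G.degree u : ℤ) - (G.degree v : ℤ)|,
          fun u v => by simp only []; rw [abs_sub_comm]⟩) e := by
            rw [irr, Finset.mul_sum]
      _ = ∑ e ∈ G.edgeFinset, ∑ d ∈ Finset.univ.filter (fun d : G.Dart => d.edge = e),
          (Sym2.lift ⟨fun u v => |(G.degree u : ℤ) - (G.degree v : ℤ)|,
          fun u v => by simp only []; rw [abs_sub_comm]⟩) e := by
            refine Finset.sum_congr rfl fun e he => ?_
            rw [Finset.sum_const, nsmul_eq_mul]
            congr 1
            have h2 : ({d : G.Dart | d.edge = e} : Finset _).card = 2 :=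
              G.dart_edge_fiber_card e (SimpleGraph.mem_edgeFinset.mp he)
            exact_mod_cast h2.symm
      _ = ∑ d : G.Dart, (Sym2.lift ⟨fun u v => |(G.degree u : ℤ) - (G.degree v : ℤ)|,
          fun u v => by simp only []; rw [abs_sub_comm]⟩) d.edge := hfib
      _ = ∑ d : G.Dart, |(G.degree d.fst : ℤ) - (G.degree d.snd : ℤ)| :=
            Finset.sum_congr rfl fun d _ => hval d
  -- on P-darts, drop the absolute value
  have hdown_abs : ∑ d ∈ Finset.univ.filter P,
      |(G.degree d.fst : ℤ) - (G.degree d.snd : ℤ)|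
      = ∑ d ∈ Finset.univ.filter P, ((G.degree d.fst : ℤ) - (G.degree d.snd : ℤ)) := by
    refine Finset.sum_congr rfl fun d hd => ?_
    simp only [Finset.mem_filter, Finset.mem_univ, true_and, hP] at hd
    have hle : (G.degree d.snd : ℤ) ≤ (G.degree d.fst : ℤ) := by
      exact_mod_cast hchild d.fst d.snd d.adj hd
    rw [abs_of_nonneg (sub_nonneg.mpr hle)]
  have hup_abs : ∑ d ∈ Finset.univ.filter (fun d => ¬ P d),
      |(G.degree d.fst : ℤ) - (G.degree d.snd : ℤ)|
      = ∑ d ∈ Finset.univ.filter P, ((G.degree d.fst : ℤ) - (G.degree d.snd : ℤ)) := by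
    rw [hflip]
    refine Finset.sum_congr rfl fun d hd => ?_
    simp only [Finset.mem_filter, Finset.mem_univ, true_and, hP] at hd
    have hle : (G.degree d.snd : ℤ) ≤ (G.degree d.fst : ℤ) := by
      exact_mod_cast hchild d.fst d.snd d.adj hd
    rw [hsymm1, hsymm2, abs_sub_comm, abs_of_nonneg (sub_nonneg.mpr hle)]
  have hirr2 : irr G = ∑ d ∈ Finset.univ.filter P,
      ((G.degree d.fst : ℤ) - (G.degree d.snd : ℤ)) := by
    have h2 : (2 : ℤ) ≠ 0 := two_ne_zero
    apply mul_left_cancel₀ h2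
    rw [hirr, ← Finset.sum_filter_add_sum_filter_not Finset.univ P, hdown_abs, hup_abs]
    ring
  -- parents
  have hex : ∀ v ∈ Finset.univ.erase r, ∃ u, G.Adj u v ∧ G.dist r u + 1 = G.dist r v :=
    fun v hv => aux_parent_exists hT r (Finset.mem_erase.mp hv).1
  choose pa hpa1 hpa2 using hex
  -- sum of degrees of snd over P-darts
  have hsnd : ∑ d ∈ Finset.univ.filter P, (G.degree d.snd : ℤ)
      = ∑ v ∈ Finset.univ.erase r, (G.degree v : ℤ) := by
    refine Finset.sum_bij' (fun d _ => d.snd)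
      (fun v hv => (⟨(pa v hv, v), hpa1 v hv⟩ : G.Dart)) ?_ ?_ ?_ ?_ ?_
    · intro d hd
      simp only [Finset.mem_filter, Finset.mem_univ, true_and, hP] at hd
      refine Finset.mem_erase.mpr ⟨?_, Finset.mem_univ _⟩
      intro hrr
      rw [hrr, SimpleGraph.dist_self] at hd
      omega
    · intro v hv
      simp only [Finset.mem_filter, Finset.mem_univ, true_and, hP]
      exact (hpa2 v hv).symm
    · intro d hd
      simp only [Finset.mem_filter, Finset.mem_univ, true_and, hP] at hd
      have hmem : d.snd ∈ Finset.univ.erase r := by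
        refine Finset.mem_erase.mpr ⟨?_, Finset.mem_univ _⟩
        intro hrr
        rw [hrr, SimpleGraph.dist_self] at hd
        omega
      refine SimpleGraph.Dart.ext _ _ ?_
      have h0 : pa d.snd hmem = d.fst :=
        aux_parent_unique hT r (hpa1 d.snd hmem) d.adj (hpa2 d.snd hmem) hd.symm
      exact Prod.ext h0 rfl
    · intro v hv; rfl
    · intro d _; rfl
  -- sum of degrees of fst over non-P darts
  have hup_fst : ∑ d ∈ Finset.univ.filter (fun d => ¬ P d), (G.degree d.fst : ℤ)
      = ∑ d ∈ Finset.univ.filter P, (G.degree d.snd : ℤ) := by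
    rw [hflip]; rfl
  -- sum of degrees of fst over all darts
  have hall_fst : ∑ d : G.Dart, (G.degree d.fst : ℤ)
      = ∑ v : V, (G.degree v : ℤ) * (G.degree v : ℤ) := by
    have hfib := Finset.sum_fiberwise_of_maps_to' (s := (Finset.univ : Finset G.Dart))
      (t := (Finset.univ : Finset V)) (g := fun d : G.Dart => d.fst)
      (f := fun v => (G.degree v : ℤ)) (fun d _ => Finset.mem_univ _)
    rw [← hfib]
    refine Finset.sum_congr rfl fun v _ => ?_
    rw [Finset.sum_const, nsmul_eq_mul]
    congr 1
    have h2 : ({d : G.Dart | d.fst = v} : Finset _).card = G.degree v :=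
      G.dart_fst_fiber_card_eq_degree v
    exact_mod_cast congrArg (Nat.cast : ℕ → ℤ) (by convert h2 using 2)
  have hsplit : ∑ d ∈ Finset.univ.filter P, (G.degree d.fst : ℤ)
      + ∑ d ∈ Finset.univ.filter (fun d => ¬ P d), (G.degree d.fst : ℤ)
      = ∑ d : G.Dart, (G.degree d.fst : ℤ) :=
    Finset.sum_filter_add_sum_filter_not _ _ _
  have herase : ∑ v ∈ Finset.univ.erase r, (G.degree v : ℤ)
      = (∑ v : V, (G.degree v : ℤ)) - (G.degree r : ℤ) := by
    rw [← Finset.sum_erase_add Finset.univ _ (Finset.mem_univ r)]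
    ring
  have hS : (∑ v : V, (G.degree v : ℤ)) = 2 * (G.edgeFinset.card : ℤ) := by
    exact_mod_cast congrArg (Nat.cast : ℕ → ℤ) G.sum_degrees_eq_twice_card_edges
  have hcardE : (G.edgeFinset.card : ℤ) + 1 = (Fintype.card V : ℤ) := by
    exact_mod_cast congrArg (Nat.cast : ℕ → ℤ) hT.card_edgeFinset
  have hexpand : ∑ v : V, ((G.degree v : ℤ) - 2) ^ 2
      = (∑ v : V, (G.degree v : ℤ) * (G.degree v : ℤ))
        - 4 * (∑ v : V, (G.degree v : ℤ)) + 4 * (Fintype.card V : ℤ) := by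
    rw [Finset.sum_congr rfl (fun v _ => (by ring : ((G.degree v : ℤ) - 2) ^ 2
      = (G.degree v : ℤ) * (G.degree v : ℤ) - 4 * (G.degree v : ℤ) + 4))]
    rw [Finset.sum_add_distrib, Finset.sum_sub_distrib, ← Finset.mul_sum,
      Finset.sum_const, Finset.card_univ, nsmul_eq_mul]
    ring
  have hmax : (G.maxDegree : ℤ) = (G.degree r : ℤ) := by exact_mod_cast hr.symm
  rw [hirr2, Finset.sum_sub_distrib, hsnd, herase, hexpand, hmax]
  have hfst : ∑ d ∈ Finset.univ.filter P, (G.degree d.fst : ℤ)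
      = (∑ v : V, (G.degree v : ℤ) * (G.degree v : ℤ))
        - ((∑ v : V, (G.degree v : ℤ)) - (G.degree r : ℤ)) := by
    rw [← hall_fst, ← hsplit, hup_fst, hsnd, herase]
    ring
  rw [hfst]
  linarith
end

section
/- For every tree T = (V,E) of order at least 3 that contains an edge uv with |d(u) − d(v)| ≥ 2, one has ∑_{uv ∈ E} (d(u) − d(v))² ≥ ∑_{v ∈ V} (d(v) − 2)² + 2(Δ(T) − 2) + 2. -/
open Finset
open scoped Classical

/-- For every tree of order at least `3` containing an edge `uv` with `|d(u) - d(v)| ≥ 2`,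
`∑_{uv ∈ E} (d(u) - d(v))² ≥ ∑_{v ∈ V} (d(v) - 2)² + 2(Δ(T) - 2) + 2`. -/
theorem stmt6 {V : Type*} [Fintype V] (G : SimpleGraph V) (hT : G.IsTree)
    (hn : 3 ≤ Fintype.card V)
    (hedge : ∃ u v : V, G.Adj u v ∧ 2 ≤ |(G.degree u : ℤ) - (G.degree v : ℤ)|) :
    sigmaE G ≥ (∑ v : V, ((G.degree v : ℤ) - 2) ^ 2) + 2 * ((G.maxDegree : ℤ) - 2) + 2 := by
  classical
  have hconn : G.Connected := hT.isConnected
  have hne : Nonempty V := Fintype.card_pos_iff.mp (by omega)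
  obtain ⟨w, hw⟩ := G.exists_maximal_degree_vertex
  set S : Finset V := Finset.univ.erase w with hSdef
  set F : V → ℤ := fun v => (G.degree v : ℤ) - 2 with hF
  -- parent function
  have hpar : ∀ v : V, ∃ u, v ≠ w → (G.Adj v u ∧ G.dist u w + 1 = G.dist v w) := by
    intro v
    by_cases hv : v = w
    · exact ⟨w, fun h => absurd hv h⟩
    obtain ⟨P, hP⟩ := hconn.exists_walk_length_eq_dist v w
    cases P with
    | nil => exact absurd rfl hv
    | @cons _ x _ h q =>
      refine ⟨x, fun _ => ⟨h, ?_⟩⟩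
      have h1 : G.dist x w ≤ q.length := SimpleGraph.dist_le q
      have h2 : G.dist v w ≤ G.dist v x + G.dist x w := hconn.dist_triangle
      have h3 : G.dist v x ≤ 1 := by
        simpa using SimpleGraph.dist_le (SimpleGraph.Walk.cons h SimpleGraph.Walk.nil)
      simp only [SimpleGraph.Walk.length_cons] at hP
      omega
  choose p hp using hpar
  have hadjp : ∀ v : V, v ≠ w → G.Adj v (p v) := fun v hv => (hp v hv).1
  have hdistp : ∀ v : V, v ≠ w → G.dist (p v) w + 1 = G.dist v w := fun v hv => (hp v hv).2
  -- the map to edges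
  have hΦmem : ∀ v ∈ S, s(v, p v) ∈ G.edgeFinset := by
    intro v hv
    rw [SimpleGraph.mem_edgeFinset]
    exact (hadjp v (Finset.ne_of_mem_erase hv))
  have hΦinj : ∀ v₁ ∈ S, ∀ v₂ ∈ S, s(v₁, p v₁) = s(v₂, p v₂) → v₁ = v₂ := by
    intro v₁ h₁ v₂ h₂ heq
    have hne₁ := Finset.ne_of_mem_erase h₁
    have hne₂ := Finset.ne_of_mem_erase h₂
    rw [Sym2.eq_iff] at heq
    rcases heq with ⟨h, _⟩ | ⟨ha, hb⟩
    · exact h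
    · exfalso
      have d1 := hdistp v₁ hne₁
      have d2 := hdistp v₂ hne₂
      rw [hb] at d1
      rw [← ha] at d2
      omega
  have hcard : G.edgeFinset.card ≤ S.card := by
    have := hT.card_edgeFinset
    have : S.card = Fintype.card V - 1 := by
      rw [hSdef, Finset.card_erase_of_mem (Finset.mem_univ w), Finset.card_univ]
    omega
  have hsurj := Finset.surj_on_of_inj_on_of_card_le (s := S) (t := G.edgeFinset)
    (fun v _ => s(v, p v)) hΦmem (fun a₁ a₂ ha₁ ha₂ h => hΦinj a₁ ha₁ a₂ ha₂ h) hcard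
  -- fibers
  have hfib_w : S.filter (fun v => p v = w) = G.neighborFinset w := by
    apply Finset.ext
    intro x
    simp only [Finset.mem_filter, SimpleGraph.mem_neighborFinset]
    constructor
    · rintro ⟨hxS, hpx⟩
      have := hadjp x (Finset.ne_of_mem_erase hxS)
      rw [hpx] at this
      exact this.symm
    · intro hadj
      obtain ⟨y, hy, hey⟩ := hsurj s(x, w) (by rw [SimpleGraph.mem_edgeFinset]; exact hadj.symm)
      rw [Sym2.eq_iff] at hey
      rcases hey with ⟨ha, hb⟩ | ⟨ha, hb⟩
      · subst ha
        exact ⟨hy, hb.symm⟩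
      · exfalso
        exact Finset.ne_of_mem_erase hy hb.symm
  have hfib : ∀ u : V, u ≠ w →
      S.filter (fun v => p v = u) = (G.neighborFinset u).erase (p u) := by
    intro u hu
    apply Finset.ext
    intro x
    simp only [Finset.mem_filter, Finset.mem_erase, SimpleGraph.mem_neighborFinset]
    constructor
    · rintro ⟨hxS, hpx⟩
      have hxw := Finset.ne_of_mem_erase hxS
      refine ⟨?_, ?_⟩
      · intro hxp
        have d1 := hdistp x hxw
        have d2 := hdistp u hu
        rw [hpx] at d1
        rw [← hxp] at d2
        omega
      · have := hadjp x hxw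
        rw [hpx] at this
        exact this.symm
    · rintro ⟨hxp, hadj⟩
      obtain ⟨y, hy, hey⟩ := hsurj s(x, u) (by rw [SimpleGraph.mem_edgeFinset]; exact hadj.symm)
      rw [Sym2.eq_iff] at hey
      rcases hey with ⟨ha, hb⟩ | ⟨ha, hb⟩
      · subst ha
        exact ⟨hy, hb.symm⟩
      · exfalso
        rw [← hb] at ha
        exact hxp ha
  -- rewrite sigmaE as a sum over S
  have hsigma : sigmaE G = ∑ v ∈ S, (F (p v) - F v) ^ 2 := by
    rw [sigmaE]
    refine (Finset.sum_bij (fun (v : V) (_ : v ∈ S) => s(v, p v)) hΦmem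
      (fun a₁ ha₁ a₂ ha₂ h => hΦinj a₁ ha₁ a₂ ha₂ h)
      (fun b hb => by obtain ⟨a, ha, h⟩ := hsurj b hb; exact ⟨a, ha, h.symm⟩)
      ?_).symm
    intro a ha
    simp only [Sym2.lift_mk, hF]
    ring
  -- the gap edge
  obtain ⟨u, v, huv, hgap⟩ := hedge
  obtain ⟨x₀, hx₀S, hx₀⟩ := hsurj s(u, v) (by rw [SimpleGraph.mem_edgeFinset]; exact huv)
  have hgapx : 2 ≤ |F (p x₀) - F x₀| := by
    rw [Sym2.eq_iff] at hx₀
    rcases hx₀ with ⟨ha, hb⟩ | ⟨ha, hb⟩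
    · rw [← hb, ← ha]
      have h2 : F v - F u = (G.degree v : ℤ) - (G.degree u : ℤ) := by simp only [hF]; ring
      rw [h2, abs_sub_comm]
      exact hgap
    · rw [← ha, ← hb]
      have h2 : F u - F v = (G.degree u : ℤ) - (G.degree v : ℤ) := by simp only [hF]; ring
      rw [h2]
      exact hgap
  -- pointwise bound
  have hpoint : ∑ v ∈ S, (F (p v) - F v) ^ 2 ≥
      ∑ v ∈ S, ((F (p v) - F v) + if v = x₀ then 2 else 0) := by
    apply Finset.sum_le_sum
    intro i hi
    by_cases hix : i = x₀
    · subst hix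
      rw [if_pos rfl]
      set z := F (p i) - F i with hz
      rcases abs_cases z with ⟨h1, _⟩ | ⟨h1, _⟩
      · have h2 : 2 ≤ z := by rw [h1] at hgapx; exact hgapx
        nlinarith [mul_nonneg (by linarith : (0:ℤ) ≤ z - 2) (by linarith : (0:ℤ) ≤ z + 1)]
      · have h2 : z ≤ -2 := by rw [h1] at hgapx; linarith
        nlinarith [sq_nonneg z]
    · simp only [if_neg hix, add_zero]
      set z := F (p i) - F i with hz
      rcases le_or_gt z 0 with h | h
      · nlinarith [sq_nonneg z]
      · nlinarith [mul_nonneg (by linarith : (0:ℤ) ≤ z) (by linarith : (0:ℤ) ≤ z - 1)]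
  have hite : ∑ v ∈ S, (if v = x₀ then (2:ℤ) else 0) = 2 := by
    rw [Finset.sum_ite_eq' S x₀ (fun _ => (2:ℤ)), if_pos hx₀S]
  -- fiberwise sum of F ∘ p
  have hfibsum : ∑ v ∈ S, F (p v) = ∑ u : V, ((G.degree u : ℤ) - 1) * F u + F w := by
    rw [← Finset.sum_fiberwise_of_maps_to (g := p) (t := Finset.univ)
      (fun v _ => Finset.mem_univ (p v)) (fun v => F (p v))]
    have step1 : ∀ u : V, ∑ v ∈ S.filter (fun v => p v = u), F (p v) =
        ((S.filter (fun v => p v = u)).card : ℤ) * F u := by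
      intro u
      rw [Finset.sum_congr rfl (fun x hx => by
        rw [(Finset.mem_filter.mp hx).2])]
      rw [Finset.sum_const, nsmul_eq_mul]
    rw [Finset.sum_congr rfl (fun u _ => step1 u)]
    have step2 : ∀ u : V, ((S.filter (fun v => p v = u)).card : ℤ) * F u =
        ((G.degree u : ℤ) - 1) * F u + (if u = w then F u else 0) := by
      intro u
      by_cases hu : u = w
      · subst hu
        rw [hfib_w, if_pos rfl, SimpleGraph.card_neighborFinset_eq_degree]
        ring
      · rw [hfib u hu, if_neg hu]
        have hmem : p u ∈ G.neighborFinset u := by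
          rw [SimpleGraph.mem_neighborFinset]; exact hadjp u hu
        rw [Finset.card_erase_of_mem hmem, SimpleGraph.card_neighborFinset_eq_degree]
        have hdeg : 1 ≤ G.degree u := by
          rw [← SimpleGraph.card_neighborFinset_eq_degree]
          exact Finset.card_pos.mpr ⟨p u, hmem⟩
        push_cast [hdeg]
        ring
    rw [Finset.sum_congr rfl (fun u _ => step2 u), Finset.sum_add_distrib,
      Finset.sum_ite_eq' Finset.univ w (fun u => F u), if_pos (Finset.mem_univ w)]
  have hFS : ∑ v ∈ S, F v = ∑ v : V, F v - F w :=
    Finset.sum_erase_eq_sub (Finset.mem_univ w)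
  -- key identity: sum of (d-1)*F - sum F = sum F^2
  have hkey : ∑ u : V, ((G.degree u : ℤ) - 1) * F u - ∑ v : V, F v = ∑ v : V, F v ^ 2 := by
    rw [← Finset.sum_sub_distrib]
    apply Finset.sum_congr rfl
    intro x _
    rw [hF]
    ring
  -- assemble
  have hmax : (G.maxDegree : ℤ) = (G.degree w : ℤ) := by exact_mod_cast hw
  have hFw : F w = (G.maxDegree : ℤ) - 2 := by rw [hF, hmax]
  have hsum2 : ∑ v ∈ S, ((F (p v) - F v) + if v = x₀ then 2 else 0) =
      ∑ v : V, F v ^ 2 + 2 * F w + 2 := by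
    rw [Finset.sum_add_distrib, hite, Finset.sum_sub_distrib, hfibsum, hFS]
    rw [← hkey]
    ring
  have : sigmaE G ≥ ∑ v : V, F v ^ 2 + 2 * F w + 2 := by
    rw [hsigma, ← hsum2]
    exact hpoint
  rw [hFw] at this
  calc sigmaE G ≥ ∑ v : V, F v ^ 2 + 2 * ((G.maxDegree : ℤ) - 2) + 2 := this
    _ = (∑ v : V, ((G.degree v : ℤ) - 2) ^ 2) + 2 * ((G.maxDegree : ℤ) - 2) + 2 := by rw [hF]
end

section
/- Every tree T = (V,E) of order n with maximum degree Δ satisfies ∑_{v ∈ V} (d(v) − 2)² ≤ (n − 2)(Δ − 2) + 2. -/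
open Finset
open scoped Classical

/-- Every tree of order `n` with maximum degree `Δ` satisfies
`∑_{v ∈ V} (d(v) - 2)² ≤ (n-2)(Δ-2) + 2`. -/
theorem stmt7 {V : Type*} [Fintype V] (G : SimpleGraph V) (hT : G.IsTree) :
    (∑ v : V, ((G.degree v : ℤ) - 2) ^ 2)
      ≤ ((Fintype.card V : ℤ) - 2) * ((G.maxDegree : ℤ) - 2) + 2 := by
  classical
  have hne : Nonempty V := hT.isConnected.nonempty
  have hcard1 : 1 ≤ Fintype.card V := Fintype.card_pos
  rcases eq_or_lt_of_le hcard1 with h1 | h2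
  · -- card = 1 case
    have hc : Fintype.card V = 1 := h1.symm
    obtain ⟨v, hv⟩ := Fintype.card_eq_one_iff.mp hc
    have hdeg : ∀ u : V, G.degree u = 0 := fun u => by
      have := G.degree_lt_card_verts u
      omega
    have hmax : G.maxDegree = 0 := by
      have := G.maxDegree_le_of_forall_degree_le 0 (fun u => (hdeg u).le)
      omega
    rw [Fintype.sum_eq_single v (fun u hu => absurd (hv u) hu)]
    rw [hdeg v, hmax, hc]
    norm_num
  · -- card ≥ 2
    have hdegpos : ∀ u : V, 1 ≤ G.degree u := by
      intro u
      obtain ⟨w, hw⟩ := Fintype.exists_ne_of_one_lt_card h2 u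
      obtain ⟨p⟩ := hT.isConnected.preconnected u w
      rw [Nat.one_le_iff_ne_zero, ← Nat.pos_iff_ne_zero, G.degree_pos_iff_exists_adj]
      cases p with
      | nil => exact absurd rfl hw.symm
      | cons h q => exact ⟨_, h⟩
    have hsum : (∑ v : V, (G.degree v : ℤ)) = 2 * ((Fintype.card V : ℤ) - 1) := by
      have h1 : (∑ v : V, (G.degree v : ℤ)) = 2 * (G.edgeFinset.card : ℤ) := by
        exact_mod_cast G.sum_degrees_eq_twice_card_edges
      have h2' : (G.edgeFinset.card : ℤ) + 1 = (Fintype.card V : ℤ) := by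
        exact_mod_cast hT.card_edgeFinset
      linarith
    set M : ℤ := (G.maxDegree : ℤ) - 2 with hM
    have key : ∀ v : V, ((G.degree v : ℤ) - 2) ^ 2 ≤ (M - 1) * ((G.degree v : ℤ) - 2) + M := by
      intro v
      have hlo : (1 : ℤ) ≤ (G.degree v : ℤ) := by exact_mod_cast hdegpos v
      have hhi : (G.degree v : ℤ) ≤ (G.maxDegree : ℤ) := by
        exact_mod_cast G.degree_le_maxDegree v
      nlinarith [mul_nonneg (by linarith : (0:ℤ) ≤ (G.degree v : ℤ) - 1)
        (by linarith : (0:ℤ) ≤ (G.maxDegree : ℤ) - (G.degree v : ℤ))]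
    calc (∑ v : V, ((G.degree v : ℤ) - 2) ^ 2)
        ≤ ∑ v : V, ((M - 1) * ((G.degree v : ℤ) - 2) + M) := Finset.sum_le_sum fun v _ => key v
      _ = (M - 1) * ((∑ v : V, (G.degree v : ℤ)) - 2 * (Fintype.card V : ℤ))
            + (Fintype.card V : ℤ) * M := by
          rw [Finset.sum_add_distrib, Finset.sum_const, ← Finset.mul_sum,
            Finset.sum_sub_distrib, Finset.sum_const]
          simp only [Finset.card_univ, nsmul_eq_mul]
          ring
      _ = ((Fintype.card V : ℤ) - 2) * M + 2 := by rw [hsum]; ring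
end

section
/- For every connected finite simple graph G of order n, σ_t(G) ≤ √1.5 · n^{5/2} · σ(G). -/
open Finset
open scoped Classical

noncomputable section
variable {V : Type*}

/-- Degree as an integer. -/
def dz [Fintype V] (G : SimpleGraph V) : V → ℤ := fun v => (G.degree v : ℤ)

end


section Part1

variable {V : Type*} [Fintype V] (G : SimpleGraph V)

@[simp] lemma dz_apply (v : V) : dz G v = (G.degree v : ℤ) := rfl

lemma two_sigmaT :
    2 * sigmaT G = ∑ x ∈ (Finset.univ : Finset V).offDiag, (dz G x.1 - dz G x.2) ^ 2 := by
  classical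
  have hmaps : ∀ x ∈ (Finset.univ : Finset V).offDiag,
      (Sym2.mk (α := V) x.1 x.2) ∈ (Finset.univ : Finset V).sym2.filter (fun p => ¬ p.IsDiag) := by
    rintro ⟨a, b⟩ hx
    rw [Finset.mem_offDiag] at hx
    simp only [Finset.mem_filter, Finset.mem_sym2_iff]
    exact ⟨fun y _ => Finset.mem_univ y, by simpa using hx.2.2⟩
  have key := Finset.sum_fiberwise_of_maps_to
      (t := (Finset.univ : Finset V).sym2.filter (fun p => ¬ p.IsDiag))
      (g := fun x : V × V => Sym2.mk x.1 x.2) hmaps (fun x => (dz G x.1 - dz G x.2) ^ 2)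
  rw [← key]
  rw [sigmaT, Finset.mul_sum]
  apply Finset.sum_congr rfl
  intro p hp
  rw [Finset.mem_filter, Finset.mem_sym2_iff] at hp
  induction p using Sym2.inductionOn with
  | hf a b =>
    have hab : a ≠ b := by simpa using hp.2
    have hfib : ((Finset.univ : Finset V).offDiag.filter (fun x : V × V => Sym2.mk x.1 x.2 = s(a, b)))
        = ({(a, b), (b, a)} : Finset (V × V)) := by
      ext ⟨c, d⟩
      simp only [Finset.mem_filter, Finset.mem_offDiag, Finset.mem_univ, true_and,
        Finset.mem_insert, Finset.mem_singleton, Prod.mk.injEq, Sym2.eq_iff]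
      constructor
      · rintro ⟨hcd, h | h⟩
        · exact Or.inl ⟨h.1, h.2⟩
        · exact Or.inr ⟨h.1, h.2⟩
      · rintro (⟨rfl, rfl⟩ | ⟨rfl, rfl⟩)
        · exact ⟨hab, Or.inl ⟨rfl, rfl⟩⟩
        · exact ⟨hab.symm, Or.inr ⟨rfl, rfl⟩⟩
    have hne : ((a, b) : V × V) ≠ (b, a) := fun h => hab (congrArg Prod.fst h)
    rw [hfib, Finset.sum_insert (by simpa using hne), Finset.sum_singleton, Sym2.lift_mk]
    show 2 * ((G.degree a : ℤ) - (G.degree b : ℤ)) ^ 2 = _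
    simp only [dz_apply]
    ring

lemma offDiag_sum_eq :
    ∑ x ∈ (Finset.univ : Finset V).offDiag, (dz G x.1 - dz G x.2) ^ 2
      = 2 * (Fintype.card V : ℤ) * (∑ v, dz G v ^ 2) - 2 * (∑ v, dz G v) ^ 2 := by
  classical
  have hsplit : ∑ x ∈ (Finset.univ ×ˢ Finset.univ : Finset (V × V)), (dz G x.1 - dz G x.2) ^ 2
      = ∑ x ∈ (Finset.univ : Finset V).offDiag, (dz G x.1 - dz G x.2) ^ 2 := by
    rw [← Finset.sum_filter_add_sum_filter_not (Finset.univ ×ˢ Finset.univ)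
      (fun x : V × V => x.1 ≠ x.2)]
    have h1 : (Finset.univ ×ˢ Finset.univ : Finset (V × V)).filter (fun x => x.1 ≠ x.2)
        = (Finset.univ : Finset V).offDiag := by
      ext x; simp [Finset.mem_offDiag, Finset.mem_filter]
    have h2 : ∑ x ∈ (Finset.univ ×ˢ Finset.univ : Finset (V × V)).filter
        (fun x : V × V => ¬ x.1 ≠ x.2), (dz G x.1 - dz G x.2) ^ 2 = 0 := by
      apply Finset.sum_eq_zero
      intro x hx
      rw [Finset.mem_filter] at hx
      have : x.1 = x.2 := by simpa using hx.2
      rw [this]; ring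
    rw [h1, h2, add_zero]
  rw [← hsplit, Finset.sum_product]
  have expand : ∀ u : V, ∑ v : V, (dz G u - dz G v) ^ 2
      = (Fintype.card V : ℤ) * dz G u ^ 2 - 2 * dz G u * (∑ v, dz G v) + ∑ v, dz G v ^ 2 := by
    intro u
    have h3 : ∀ v : V, (dz G u - dz G v) ^ 2 = dz G u ^ 2 - 2 * dz G u * dz G v + dz G v ^ 2 := by
      intro v; ring
    rw [Finset.sum_congr rfl (fun v _ => h3 v), Finset.sum_add_distrib, Finset.sum_sub_distrib,
      Finset.sum_const, Finset.card_univ, ← Finset.mul_sum]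
    push_cast
    ring
  rw [Finset.sum_congr rfl (fun u _ => expand u), Finset.sum_add_distrib, Finset.sum_sub_distrib,
    ← Finset.mul_sum, ← Finset.sum_mul, ← Finset.mul_sum, Finset.sum_const, Finset.card_univ]
  push_cast
  ring

lemma sigmaT_identity :
    sigmaT G = (Fintype.card V : ℤ) * (∑ v, dz G v ^ 2) - (∑ v, dz G v) ^ 2 := by
  have h := two_sigmaT G
  rw [offDiag_sum_eq] at h
  linarith

lemma sigmaT_le_BD (D δ : ℤ) (hl : ∀ v, δ ≤ dz G v) (hu : ∀ v, dz G v ≤ D) :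
    4 * sigmaT G ≤ (Fintype.card V : ℤ) ^ 2 * (D - δ) ^ 2 := by
  classical
  have h0 : 0 ≤ ∑ v : V, (D - dz G v) * (dz G v - δ) :=
    Finset.sum_nonneg (fun v _ => mul_nonneg (by linarith [hu v]) (by linarith [hl v]))
  have hexp : ∑ v : V, (D - dz G v) * (dz G v - δ)
      = (D + δ) * (∑ v, dz G v) - (∑ v, dz G v ^ 2) - (Fintype.card V : ℤ) * (D * δ) := by
    have h3 : ∀ v : V, (D - dz G v) * (dz G v - δ)
        = (D + δ) * dz G v - dz G v ^ 2 - D * δ := by intro v; ring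
    rw [Finset.sum_congr rfl (fun v _ => h3 v), Finset.sum_sub_distrib, Finset.sum_sub_distrib,
      ← Finset.mul_sum, Finset.sum_const, Finset.card_univ]
    push_cast
    ring
  rw [sigmaT_identity]
  rw [hexp] at h0
  nlinarith [sq_nonneg ((Fintype.card V : ℤ) * (D + δ) - 2 * (∑ v, dz G v)), sq_nonneg (D - δ)]

end Part1


section Chain

variable {V : Type*} {G : SimpleGraph V} {u v : V} {L : ℕ} {f : ℕ → V}

def GChain (G : SimpleGraph V) (u v : V) (L : ℕ) (f : ℕ → V) : Prop :=
  f 0 = u ∧ f L = v ∧ ∀ i, i < L → G.Adj (f i) (f (i + 1))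

lemma exists_chain (h : G.Connected) (u v : V) : ∃ L f, GChain G u v L f := by
  obtain ⟨w⟩ := h.preconnected u v
  exact ⟨w.length, w.getVert, w.getVert_zero, w.getVert_length,
    fun i hi => w.adj_getVert_succ hi⟩

lemma chain_inj (hc : GChain G u v L f)
    (hmin : ∀ L' f', GChain G u v L' f' → L ≤ L') :
    ∀ i j, i ≤ L → j ≤ L → f i = f j → i = j := by
  obtain ⟨h0, hL, hadj⟩ := hc
  -- WLOG helper
  suffices H : ∀ i j, i < j → j ≤ L → f i = f j → False by
    intro i j hi hj hf
    rcases lt_trichotomy i j with h | h | h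
    · exact absurd hf (fun hf => H i j h hj hf)
    · exact h
    · exact absurd hf.symm (fun hf => H j i h hi hf)
  intro i j hij hjL hf
  set t := j - i with ht
  have ht1 : 1 ≤ t := by omega
  set f' : ℕ → V := fun k => if k ≤ i then f k else f (k + t) with hf'
  have hchain' : GChain G u v (L - t) f' := by
    refine ⟨?_, ?_, ?_⟩
    · simp only [hf']
      rw [if_pos (Nat.zero_le i)]
      exact h0
    · simp only [hf']
      by_cases hcase : L - t ≤ i
      · -- then L - t = i (since L - t ≥ i always); f i = f j = f (i + t)
        have hLt : L - t = i := by omega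
        have hjL' : j = L := by omega
        rw [if_pos hcase, hLt, hf, hjL']
        exact hL
      · rw [if_neg hcase]
        have : L - t + t = L := by omega
        rw [this]
        exact hL
    · intro k hk
      simp only [hf']
      rcases lt_trichotomy k i with h | h | h
      · rw [if_pos (le_of_lt h), if_pos (by omega)]
        exact hadj k (by omega)
      · subst h
        rw [if_pos le_rfl, if_neg (by omega), hf]
        have : k + 1 + t = j + 1 := by omega
        rw [this]
        exact hadj j (by omega)
      · rw [if_neg (by omega), if_neg (by omega)]
        have : k + 1 + t = k + t + 1 := by omega
        rw [this]
        exact hadj (k + t) (by omega)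
  have := hmin (L - t) f' hchain'
  omega

lemma chain_window (hc : GChain G u v L f)
    (hmin : ∀ L' f', GChain G u v L' f' → L ≤ L') :
    ∀ w i j, i < j → j ≤ L → G.Adj (f i) w → G.Adj (f j) w → j ≤ i + 2 := by
  obtain ⟨h0, hL, hadj⟩ := hc
  intro w i j hij hjL hai haj
  by_contra hcon
  push_neg at hcon
  set t := j - i - 2 with ht
  have ht1 : 1 ≤ t := by omega
  set f' : ℕ → V := fun k => if k ≤ i then f k else if k = i + 1 then w else f (k + t) with hf'
  have hchain' : GChain G u v (L - t) f' := by
    refine ⟨?_, ?_, ?_⟩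
    · simp only [hf']
      rw [if_pos (Nat.zero_le i)]
      exact h0
    · simp only [hf']
      have h2 : ¬ (L - t ≤ i) := by omega
      have h3 : L - t ≠ i + 1 := by omega
      rw [if_neg h2, if_neg h3]
      have : L - t + t = L := by omega
      rw [this]
      exact hL
    · intro k hk
      simp only [hf']
      rcases lt_trichotomy k i with h | h | h
      · rw [if_pos (le_of_lt h), if_pos (by omega)]
        exact hadj k (by omega)
      · subst h
        rw [if_pos le_rfl, if_neg (by omega), if_pos rfl]
        exact hai
      · rcases eq_or_lt_of_le (Nat.succ_le_of_lt h) with h1 | h1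
        · -- k = i + 1
          rw [if_neg (by omega), if_pos h1.symm, if_neg (by omega), if_neg (by omega)]
          have hj' : k + 1 + t = j := by omega
          rw [hj']
          exact haj.symm
        · rw [if_neg (by omega), if_neg (by omega), if_neg (by omega), if_neg (by omega)]
          have : k + 1 + t = k + t + 1 := by omega
          rw [this]
          exact hadj (k + t) (by omega)
  have := hmin (L - t) f' hchain'
  omega

end Chain

section DegSum

variable {V : Type*} [Fintype V] {G : SimpleGraph V} {u v : V} {L : ℕ} {f : ℕ → V}

lemma chain_degree_sum [DecidableEq V] [DecidableRel G.Adj]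
    (hc : GChain G u v L f)
    (hmin : ∀ L' f', GChain G u v L' f' → L ≤ L') :
    ∑ i ∈ Finset.range (L + 1), G.degree (f i) ≤ 3 * Fintype.card V := by
  have hdeg : ∀ i, G.degree (f i) = (Finset.univ.filter (fun w => G.Adj (f i) w)).card := by
    intro i
    rw [← SimpleGraph.neighborFinset_eq_filter]
    rfl
  calc ∑ i ∈ Finset.range (L + 1), G.degree (f i)
      = ∑ i ∈ Finset.range (L + 1), ∑ w ∈ Finset.univ,
          (if G.Adj (f i) w then 1 else 0) := by
        apply Finset.sum_congr rfl
        intro i _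
        rw [hdeg i, Finset.card_filter]
    _ = ∑ w ∈ Finset.univ, ∑ i ∈ Finset.range (L + 1),
          (if G.Adj (f i) w then 1 else 0) := Finset.sum_comm
    _ = ∑ w ∈ Finset.univ, ((Finset.range (L + 1)).filter (fun i => G.Adj (f i) w)).card := by
        apply Finset.sum_congr rfl
        intro w _
        rw [Finset.card_filter]
    _ ≤ ∑ _w ∈ (Finset.univ : Finset V), 3 := by
        apply Finset.sum_le_sum
        intro w _
        set S := (Finset.range (L + 1)).filter (fun i => G.Adj (f i) w) with hS
        by_cases hne : S.Nonempty
        · set m := S.min' hne with hm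
          have hmS : m ∈ S := S.min'_mem hne
          have hsub : S ⊆ Finset.Icc m (m + 2) := by
            intro j hj
            rw [Finset.mem_Icc]
            constructor
            · exact S.min'_le j hj
            · rcases eq_or_lt_of_le (S.min'_le j hj) with h | h
              · omega
              · have hmr : m ∈ Finset.range (L + 1) := (Finset.mem_filter.mp hmS).1
                have hjr : j ∈ Finset.range (L + 1) := (Finset.mem_filter.mp hj).1
                have := chain_window hc hmin w m j h
                  (by simpa using Nat.lt_succ_iff.mp (Finset.mem_range.mp hjr))
                  (Finset.mem_filter.mp hmS).2 (Finset.mem_filter.mp hj).2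
                omega
          calc S.card ≤ (Finset.Icc m (m + 2)).card := Finset.card_le_card hsub
            _ = 3 := by rw [Nat.card_Icc]; omega
        · rw [Finset.not_nonempty_iff_eq_empty] at hne
          rw [hne]
          simp
    _ = 3 * Fintype.card V := by
        rw [Finset.sum_const, Finset.card_univ, smul_eq_mul, mul_comm]

end DegSum


section Pred

noncomputable def fpred (A : Finset ℤ) (a : ℤ) : ℤ := WithBot.unbotD 0 ((A.filter (· < a)).max)

variable {A : Finset ℤ} {a : ℤ}

lemma fpred_eq (h : (A.filter (· < a)).Nonempty) :
    fpred A a = (A.filter (· < a)).max' h := by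
  rw [fpred, ← Finset.coe_max' h]
  rfl

lemma fpred_mem (h : (A.filter (· < a)).Nonempty) : fpred A a ∈ A := by
  rw [fpred_eq h]
  exact (Finset.mem_filter.mp ((A.filter (· < a)).max'_mem h)).1

lemma fpred_lt (h : (A.filter (· < a)).Nonempty) : fpred A a < a := by
  rw [fpred_eq h]
  exact (Finset.mem_filter.mp ((A.filter (· < a)).max'_mem h)).2

lemma le_fpred (h : (A.filter (· < a)).Nonempty) {b : ℤ} (hb : b ∈ A) (hba : b < a) :
    b ≤ fpred A a := by
  rw [fpred_eq h]
  apply Finset.le_max'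
  rw [Finset.mem_filter]
  exact ⟨hb, hba⟩

lemma tele {M : Type*} [AddCommGroup M] (h : ℤ → M) :
    ∀ (n : ℕ) (A : Finset ℤ) (hA : A.Nonempty), A.card = n →
      ∑ a ∈ A.erase (A.min' hA), (h a - h (fpred A a)) = h (A.max' hA) - h (A.min' hA) := by
  intro n
  induction n with
  | zero => intro A hA hcard; exact absurd hcard (by simpa using Finset.card_ne_zero_of_mem (hA.choose_spec))
  | succ n ih =>
    intro A hA hcard
    by_cases h1 : A.card = 1
    · obtain ⟨x, hx⟩ := Finset.card_eq_one.mp h1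
      subst hx
      simp
    · have h2 : 2 ≤ A.card := by omega
      set m := A.min' hA with hm
      set Mx := A.max' hA with hMx
      have hmM : m < Mx := Finset.min'_lt_max'_of_card A (by omega)
      have hMA : Mx ∈ A := A.max'_mem hA
      have hmA : m ∈ A := A.min'_mem hA
      set A₂ := A.erase Mx with hA₂
      have hmA₂ : m ∈ A₂ := Finset.mem_erase.mpr ⟨ne_of_lt hmM, hmA⟩
      have hA₂ne : A₂.Nonempty := ⟨m, hmA₂⟩
      have hA₂card : A₂.card = n := by
        rw [hA₂, Finset.card_erase_of_mem hMA]; omega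
      have hmin₂ : A₂.min' hA₂ne = m := by
        apply le_antisymm
        · exact Finset.min'_le _ _ hmA₂
        · exact Finset.le_min' _ _ _ (fun b hb => Finset.min'_le _ _ (Finset.mem_of_mem_erase hb))
      have hfilterM : A.filter (· < Mx) = A₂ := by
        ext b
        simp only [Finset.mem_filter, hA₂, Finset.mem_erase]
        constructor
        · rintro ⟨hbA, hbM⟩; exact ⟨ne_of_lt hbM, hbA⟩
        · rintro ⟨hbne, hbA⟩
          exact ⟨hbA, lt_of_le_of_ne (Finset.le_max' _ _ hbA) hbne⟩
      have hmax₂ : A₂.max' hA₂ne = fpred A Mx := by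
        have hne : (A.filter (· < Mx)).Nonempty := by rw [hfilterM]; exact hA₂ne
        rw [fpred_eq hne]
        congr 1
        exact hfilterM.symm
      have hpred₂ : ∀ a ∈ A₂.erase m, fpred A a = fpred A₂ a := by
        intro a ha
        have haA₂ : a ∈ A₂ := Finset.mem_of_mem_erase ha
        have haM : a < Mx := lt_of_le_of_ne (Finset.le_max' _ _ (Finset.mem_of_mem_erase haA₂))
          (Finset.mem_erase.mp haA₂).1
        have : A.filter (· < a) = A₂.filter (· < a) := by
          ext b
          simp only [Finset.mem_filter, hA₂, Finset.mem_erase]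
          constructor
          · rintro ⟨hbA, hba⟩
            exact ⟨⟨by omega, hbA⟩, hba⟩
          · rintro ⟨⟨_, hbA⟩, hba⟩
            exact ⟨hbA, hba⟩
        rw [fpred, fpred, this]
      have hsplit : A.erase m = insert Mx (A₂.erase m) := by
        ext b
        simp only [Finset.mem_erase, Finset.mem_insert, hA₂]
        constructor
        · rintro ⟨hbm, hbA⟩
          by_cases hbM : b = Mx
          · exact Or.inl hbM
          · exact Or.inr ⟨hbm, hbM, hbA⟩
        · rintro (rfl | ⟨hbm, _, hbA⟩)
          · exact ⟨by omega, hMA⟩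
          · exact ⟨hbm, hbA⟩
      have hMnot : Mx ∉ A₂.erase m := fun hc =>
        (Finset.mem_erase.mp (Finset.mem_of_mem_erase hc)).1 rfl
      rw [hsplit, Finset.sum_insert hMnot]
      have hcongr : ∑ a ∈ A₂.erase m, (h a - h (fpred A a))
          = ∑ a ∈ A₂.erase m, (h a - h (fpred A₂ a)) :=
        Finset.sum_congr rfl (fun a ha => by rw [hpred₂ a ha])
      rw [hcongr]
      have := ih A₂ hA₂ne hA₂card
      rw [hmin₂] at this
      rw [this, hmax₂]
      abel

end Pred



section EdgeSum

variable {V : Type*} [Fintype V]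

lemma sigmaE_term_nonneg (G : SimpleGraph V) (p : Sym2 V) :
    0 ≤ Sym2.lift ⟨fun u v => ((G.degree u : ℤ) - (G.degree v : ℤ)) ^ 2,
      fun u v => by simp only []; ring⟩ p := by
  induction p using Sym2.inductionOn with
  | hf a b =>
    rw [Sym2.lift_mk]
    exact sq_nonneg _

lemma sigmaE_nonneg (G : SimpleGraph V) : 0 ≤ sigmaE G :=
  Finset.sum_nonneg (fun p _ => sigmaE_term_nonneg G p)

lemma edge_sum_le (G : SimpleGraph V) {m : ℕ} (e : ℕ → V × V)
    (hadj : ∀ i, i < m → G.Adj (e i).1 (e i).2)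
    (hinj : ∀ i ∈ Finset.range m, ∀ j ∈ Finset.range m,
      (s((e i).1, (e i).2) : Sym2 V) = s((e j).1, (e j).2) → i = j) :
    ∑ i ∈ Finset.range m, (dz G (e i).1 - dz G (e i).2) ^ 2 ≤ sigmaE G := by
  classical
  set F : Sym2 V → ℤ := Sym2.lift ⟨fun u v => ((G.degree u : ℤ) - (G.degree v : ℤ)) ^ 2,
      fun u v => by simp only []; ring⟩ with hF
  have h1 : ∑ i ∈ Finset.range m, (dz G (e i).1 - dz G (e i).2) ^ 2
      = ∑ p ∈ (Finset.range m).image (fun i => (s((e i).1, (e i).2) : Sym2 V)), F p := by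
    rw [Finset.sum_image hinj]
    apply Finset.sum_congr rfl
    intro i _
    rw [hF, Sym2.lift_mk]
    rfl
  rw [h1, sigmaE]
  apply Finset.sum_le_sum_of_subset_of_nonneg
  · intro p hp
    rw [Finset.mem_image] at hp
    obtain ⟨i, hi, rfl⟩ := hp
    rw [SimpleGraph.mem_edgeFinset, SimpleGraph.mem_edgeSet]
    exact hadj i (Finset.mem_range.mp hi)
  · intro p _ _
    exact sigmaE_term_nonneg G p

end EdgeSum
section CoreLemma

variable {V : Type*} [Fintype V]

lemma core (G : SimpleGraph V) (hG : G.Connected) (u v : V)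
    (hu : ∀ x, dz G u ≤ dz G x) (hv : ∀ x, dz G x ≤ dz G v) :
    dz G v - dz G u ≤ sigmaE G ∧
      4 * (((dz G v - dz G u) : ℤ) : ℝ) ^ 3
        ≤ 27 * (Fintype.card V : ℝ) * (sigmaE G : ℝ) := by
  classical
  set δ : ℤ := dz G u with hδ
  set Δ : ℤ := dz G v with hΔ
  have hδ0 : 0 ≤ δ := Int.natCast_nonneg _
  -- minimal chain from u to v
  have hexP : ∃ L : ℕ, ∃ f : ℕ → V, GChain G u v L f := by
    obtain ⟨L, f, h⟩ := exists_chain hG u v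
    exact ⟨L, f, h⟩
  set L : ℕ := Nat.find hexP with hL
  obtain ⟨f, hf⟩ := Nat.find_spec hexP
  have hmin : ∀ L' f', GChain G u v L' f' → L ≤ L' :=
    fun L' f' h' => Nat.find_min' hexP ⟨f', h'⟩
  have hf0 : f 0 = u := hf.1
  have hfL : f L = v := hf.2.1
  have hfadj : ∀ i, i < L → G.Adj (f i) (f (i + 1)) := hf.2.2
  -- the set of visited degrees
  set A : Finset ℤ := (Finset.range (L + 1)).image (fun i => dz G (f i)) with hA
  have hmemA : ∀ i, i ≤ L → dz G (f i) ∈ A := by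
    intro i hi
    rw [hA]
    exact Finset.mem_image_of_mem _ (Finset.mem_range.mpr (by omega))
  have hδA : δ ∈ A := by rw [hδ, ← hf0]; exact hmemA 0 (Nat.zero_le L)
  have hΔA : Δ ∈ A := by rw [hΔ, ← hfL]; exact hmemA L le_rfl
  have hAne : A.Nonempty := ⟨δ, hδA⟩
  have hAlb : ∀ a ∈ A, δ ≤ a := by
    intro a ha
    rw [hA, Finset.mem_image] at ha
    obtain ⟨i, _, rfl⟩ := ha
    exact hu (f i)
  have hAub : ∀ a ∈ A, a ≤ Δ := by
    intro a ha
    rw [hA, Finset.mem_image] at ha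
    obtain ⟨i, _, rfl⟩ := ha
    exact hv (f i)
  have hmin' : A.min' hAne = δ :=
    le_antisymm (Finset.min'_le _ _ hδA) (Finset.le_min' _ _ _ hAlb)
  have hmax' : A.max' hAne = Δ :=
    le_antisymm (Finset.max'_le _ _ _ hAub) (Finset.le_max' _ _ hΔA)
  -- sum of distinct degree values is at most 3n
  have hAsum : ∑ a ∈ A, a ≤ 3 * (Fintype.card V : ℤ) := by
    have h1 : ∑ a ∈ A, a ≤ ∑ i ∈ Finset.range (L + 1), dz G (f i) := by
      have key := Finset.sum_fiberwise_of_maps_to (t := A)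
        (g := fun i => dz G (f i)) (fun i hi => by
          rw [hA]; exact Finset.mem_image_of_mem _ hi) (fun i => dz G (f i))
      rw [← key]
      apply Finset.sum_le_sum
      intro a ha
      rw [hA, Finset.mem_image] at ha
      obtain ⟨i0, hi0, hdi0⟩ := ha
      have hi0f : i0 ∈ (Finset.range (L + 1)).filter (fun i => dz G (f i) = a) :=
        Finset.mem_filter.mpr ⟨hi0, hdi0⟩
      calc a = dz G (f i0) := hdi0.symm
        _ ≤ ∑ i ∈ (Finset.range (L + 1)).filter (fun i => dz G (f i) = a), dz G (f i) :=
          Finset.single_le_sum (fun i _ => Int.natCast_nonneg _) hi0f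
    have h2 : ∑ i ∈ Finset.range (L + 1), dz G (f i) ≤ 3 * (Fintype.card V : ℤ) := by
      have := chain_degree_sum hf hmin
      have hcast : ∑ i ∈ Finset.range (L + 1), dz G (f i)
          = ((∑ i ∈ Finset.range (L + 1), G.degree (f i) : ℕ) : ℤ) := by
        push_cast
        rfl
      rw [hcast]
      exact_mod_cast this
    linarith
  -- gaps
  set A' : Finset ℤ := A.erase δ with hA'
  have hA'mem : ∀ a ∈ A', a ∈ A ∧ δ < a := by
    intro a ha
    rw [hA', Finset.mem_erase] at ha
    exact ⟨ha.2, lt_of_le_of_ne (hAlb a ha.2) (Ne.symm ha.1)⟩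
  have hfilne : ∀ a ∈ A', (A.filter (· < a)).Nonempty := by
    intro a ha
    exact ⟨δ, Finset.mem_filter.mpr ⟨hδA, (hA'mem a ha).2⟩⟩
  have hpmem : ∀ a ∈ A', fpred A a ∈ A := fun a ha => fpred_mem (hfilne a ha)
  have hplt : ∀ a ∈ A', fpred A a < a := fun a ha => fpred_lt (hfilne a ha)
  have hpδ : ∀ a ∈ A', δ ≤ fpred A a := fun a ha => hAlb _ (hpmem a ha)
  set g : ℤ → ℤ := fun a => a - fpred A a with hg
  have hg1 : ∀ a ∈ A', 1 ≤ g a := by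
    intro a ha
    have h5 := hplt a ha
    show (1:ℤ) ≤ a - fpred A a
    omega
  -- telescoping: sum of gaps is Δ - δ
  have htel_id : ∑ a ∈ A', g a = Δ - δ := by
    have := tele (M := ℤ) (fun x => x) A.card A hAne rfl
    rw [hmin', hmax'] at this
    exact this
  -- crossing map E
  set E : ℤ → ℕ := fun a =>
    WithBot.unbotD 0 (((Finset.range (L + 1)).filter (fun i => dz G (f i) < a)).max) with hE
  have hEfacts : ∀ a ∈ A',
      E a < L ∧ dz G (f (E a)) ≤ fpred A a ∧ a ≤ dz G (f (E a + 1)) := by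
    intro a ha
    set S : Finset ℕ := (Finset.range (L + 1)).filter (fun i => dz G (f i) < a) with hS
    have hne : S.Nonempty := by
      refine ⟨0, Finset.mem_filter.mpr ⟨Finset.mem_range.mpr (by omega), ?_⟩⟩
      rw [hf0]
      exact (hA'mem a ha).2
    have hEa : E a = S.max' hne := by
      rw [hE]
      show WithBot.unbotD 0 (S.max) = S.max' hne
      rw [← Finset.coe_max' hne]
      rfl
    have hEmemS : E a ∈ S := by rw [hEa]; exact S.max'_mem hne
    have hEub : ∀ i ∈ S, i ≤ E a := by
      intro i hi
      rw [hEa]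
      exact Finset.le_max' _ _ hi
    have hErange : E a ≤ L := by
      have := (Finset.mem_filter.mp hEmemS).1
      rw [Finset.mem_range] at this
      omega
    have hElt : dz G (f (E a)) < a := (Finset.mem_filter.mp hEmemS).2
    have hEltL : E a < L := by
      rcases eq_or_lt_of_le hErange with h | h
      · exfalso
        have : dz G (f L) < a := h ▸ hElt
        rw [hfL] at this
        have := hAub a (hA'mem a ha).1
        omega
      · exact h
    refine ⟨hEltL, ?_, ?_⟩
    · exact le_fpred (hfilne a ha) (hmemA (E a) hErange) hElt
    · by_contra hcon
      push_neg at hcon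
      have : E a + 1 ∈ S := Finset.mem_filter.mpr
        ⟨Finset.mem_range.mpr (by omega), hcon⟩
      have := hEub _ this
      omega
  -- fiber bound
  have hfiber : ∀ i ∈ Finset.range L,
      (∑ a ∈ A'.filter (fun a => E a = i), g a) ^ 2
        ≤ (dz G (f (i + 1)) - dz G (f i)) ^ 2 := by
    intro i hi
    set Fi := A'.filter (fun a => E a = i) with hFi
    by_cases hne : Fi.Nonempty
    · have hmemFi : ∀ a ∈ Fi, a ∈ A' ∧ E a = i := fun a ha => by
        rw [hFi, Finset.mem_filter] at ha; exact ha
      -- each gap interval Ioc (fpred A a) a sits inside Ioc (dz f i) (dz f (i+1))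
      have hsub : ∀ a ∈ Fi, Finset.Ioc (fpred A a) a ⊆ Finset.Ioc (dz G (f i)) (dz G (f (i + 1))) := by
        intro a ha
        obtain ⟨ha', hEa⟩ := hmemFi a ha
        obtain ⟨h1, h2, h3⟩ := hEfacts a ha'
        rw [hEa] at h2 h3
        intro x hx
        rw [Finset.mem_Ioc] at hx ⊢
        constructor
        · omega
        · omega
      have hdisj : ∀ a ∈ Fi, ∀ b ∈ Fi, a ≠ b →
          Disjoint (Finset.Ioc (fpred A a) a) (Finset.Ioc (fpred A b) b) := by
        have key : ∀ a ∈ Fi, ∀ b ∈ Fi, a < b →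
            Disjoint (Finset.Ioc (fpred A a) a) (Finset.Ioc (fpred A b) b) := by
          intro a ha b hb hab
          have hbA' : b ∈ A' := (hmemFi b hb).1
          have haA : a ∈ A := (hA'mem a (hmemFi a ha).1).1
          have hle : a ≤ fpred A b := le_fpred (hfilne b hbA') haA hab
          rw [Finset.disjoint_left]
          intro x hx hx'
          rw [Finset.mem_Ioc] at hx hx'
          omega
        intro a ha b hb hab
        rcases lt_or_gt_of_ne hab with h | h
        · exact key a ha b hb h
        · exact (key b hb a ha h).symm
      have hgcard : ∀ a ∈ Fi, g a = ((Finset.Ioc (fpred A a) a).card : ℤ) := by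
        intro a ha
        have h5 := hplt a (hmemFi a ha).1
        rw [Int.card_Ioc, Int.toNat_of_nonneg (by omega)]
      have hsum_le : ∑ a ∈ Fi, g a ≤ dz G (f (i + 1)) - dz G (f i) := by
        have h1 : ∑ a ∈ Fi, g a = ((Fi.biUnion (fun a => Finset.Ioc (fpred A a) a)).card : ℤ) := by
          rw [Finset.card_biUnion hdisj]
          push_cast
          exact Finset.sum_congr rfl hgcard
        have h2 : (Fi.biUnion (fun a => Finset.Ioc (fpred A a) a))
            ⊆ Finset.Ioc (dz G (f i)) (dz G (f (i + 1))) := by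
          intro x hx
          rw [Finset.mem_biUnion] at hx
          obtain ⟨a, ha, hxa⟩ := hx
          exact hsub a ha hxa
        have h3 := Finset.card_le_card h2
        have hD1 : 0 < dz G (f (i + 1)) - dz G (f i) := by
          obtain ⟨a0, ha0⟩ := hne
          obtain ⟨ha0', hEa0⟩ := hmemFi a0 ha0
          obtain ⟨_, hb2, hb3⟩ := hEfacts a0 ha0'
          rw [hEa0] at hb2 hb3
          have := hplt a0 ha0'
          omega
        rw [h1]
        calc ((Fi.biUnion (fun a => Finset.Ioc (fpred A a) a)).card : ℤ)
            ≤ ((Finset.Ioc (dz G (f i)) (dz G (f (i + 1)))).card : ℤ) := by exact_mod_cast h3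
          _ ≤ dz G (f (i + 1)) - dz G (f i) := by
              rw [Int.card_Ioc, Int.toNat_of_nonneg (by omega)]
      have hsum_nonneg : 0 ≤ ∑ a ∈ Fi, g a :=
        Finset.sum_nonneg (fun a ha => by linarith [hg1 a (hmemFi a ha).1])
      have habs : (∑ a ∈ Fi, g a) ^ 2 ≤ (dz G (f (i + 1)) - dz G (f i)) ^ 2 := by
        have h4 : 0 ≤ dz G (f (i+1)) - dz G (f i) := le_trans hsum_nonneg hsum_le
        nlinarith [hsum_le, hsum_nonneg]
      exact habs
    · rw [Finset.not_nonempty_iff_eq_empty] at hne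
      rw [hne, Finset.sum_empty]
      positivity
  -- sum of squared gaps is at most sigmaE
  have hg2σ : ∑ a ∈ A', (g a) ^ 2 ≤ sigmaE G := by
    have hmaps : ∀ a ∈ A', E a ∈ Finset.range L := by
      intro a ha
      exact Finset.mem_range.mpr (hEfacts a ha).1
    have key := Finset.sum_fiberwise_of_maps_to (t := Finset.range L) (g := E) hmaps
      (fun a => (g a) ^ 2)
    rw [← key]
    have step1 : ∀ i ∈ Finset.range L,
        ∑ a ∈ A'.filter (fun a => E a = i), (g a) ^ 2
          ≤ (dz G (f (i + 1)) - dz G (f i)) ^ 2 := by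
      intro i hi
      have h1 : ∑ a ∈ A'.filter (fun a => E a = i), (g a) ^ 2
          ≤ (∑ a ∈ A'.filter (fun a => E a = i), g a) ^ 2 := by
        set Fi := A'.filter (fun a => E a = i) with hFi
        have hnn : ∀ a ∈ Fi, 0 ≤ g a := fun a ha =>
          le_trans (by norm_num) (hg1 a (Finset.mem_filter.mp ha).1)
        calc ∑ a ∈ Fi, (g a) ^ 2 = ∑ a ∈ Fi, g a * g a := by
              apply Finset.sum_congr rfl; intro a _; ring
          _ ≤ ∑ a ∈ Fi, g a * (∑ b ∈ Fi, g b) := by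
              apply Finset.sum_le_sum
              intro a ha
              exact mul_le_mul_of_nonneg_left
                (Finset.single_le_sum hnn ha) (hnn a ha)
          _ = (∑ a ∈ Fi, g a) ^ 2 := by rw [← Finset.sum_mul]; ring
      exact le_trans h1 (hfiber i hi)
    calc ∑ i ∈ Finset.range L, ∑ a ∈ A'.filter (fun a => E a = i), (g a) ^ 2
        ≤ ∑ i ∈ Finset.range L, (dz G (f (i + 1)) - dz G (f i)) ^ 2 :=
          Finset.sum_le_sum step1
      _ ≤ sigmaE G := by
          have hinj : ∀ i ∈ Finset.range L, ∀ j ∈ Finset.range L,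
              (s((f i), (f (i+1))) : Sym2 V) = s((f j), (f (j+1))) → i = j := by
            intro i hi j hj hs
            rw [Finset.mem_range] at hi hj
            have hchain_inj := chain_inj hf hmin
            rw [Sym2.eq_iff] at hs
            rcases hs with ⟨h1, h2⟩ | ⟨h1, h2⟩
            · exact hchain_inj i j (by omega) (by omega) h1
            · have e1 : i = j + 1 := hchain_inj i (j+1) (by omega) (by omega) h1
              have e2 : i + 1 = j := hchain_inj (i+1) j (by omega) (by omega) h2
              omega
          have := edge_sum_le G (m := L) (fun i => (f i, f (i + 1)))
            (fun i hi => hfadj i hi) hinj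
          calc ∑ i ∈ Finset.range L, (dz G (f (i + 1)) - dz G (f i)) ^ 2
              = ∑ i ∈ Finset.range L, (dz G (f i) - dz G (f (i+1))) ^ 2 := by
                apply Finset.sum_congr rfl; intro i _; ring
            _ ≤ sigmaE G := this
  -- s ≤ sigmaE
  have hsσ : Δ - δ ≤ sigmaE G := by
    have h1 : ∑ a ∈ A', g a ≤ ∑ a ∈ A', (g a) ^ 2 := by
      apply Finset.sum_le_sum
      intro a ha
      nlinarith [hg1 a ha]
    rw [← htel_id]
    linarith
  refine ⟨hsσ, ?_⟩
  -- Cauchy-Schwarz part, in ℝ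
  set n : ℝ := (Fintype.card V : ℝ) with hn
  set σ : ℝ := ((sigmaE G : ℤ) : ℝ) with hσ
  set sR : ℝ := ((Δ - δ : ℤ) : ℝ) with hsR
  have hsR0 : 0 ≤ sR := by
    rw [hsR]
    have : δ ≤ Δ := hu v
    exact_mod_cast sub_nonneg.mpr this
  have hσ0 : 0 ≤ σ := by rw [hσ]; exact_mod_cast sigmaE_nonneg G
  -- weights
  have hwnonneg : ∀ a ∈ A', (0:ℝ) ≤ ((a - δ : ℤ) : ℝ) := by
    intro a ha
    have := (hA'mem a ha).2
    have : (0:ℤ) ≤ a - δ := by omega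
    exact_mod_cast this
  have hWsum : ∑ a ∈ A', ((a - δ : ℤ) : ℝ) ≤ 3 * n := by
    have h1 : ∑ a ∈ A', (a - δ) ≤ ∑ a ∈ A', a := by
      apply Finset.sum_le_sum
      intro a _
      omega
    have h2 : ∑ a ∈ A', a ≤ ∑ a ∈ A, a := by
      apply Finset.sum_le_sum_of_subset_of_nonneg (Finset.erase_subset _ _)
      intro a ha _
      linarith [hAlb a ha, hδ0]
    have h3 : ∑ a ∈ A', (a - δ) ≤ 3 * (Fintype.card V : ℤ) := by linarith
    calc ∑ a ∈ A', ((a - δ : ℤ) : ℝ) = ((∑ a ∈ A', (a - δ) : ℤ) : ℝ) := by push_cast; rfl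
      _ ≤ ((3 * (Fintype.card V : ℤ) : ℤ) : ℝ) := by exact_mod_cast h3
      _ = 3 * n := by push_cast; rfl
  -- Cauchy-Schwarz
  have hCS := Finset.sum_mul_sq_le_sq_mul_sq A' (fun a => ((g a : ℤ) : ℝ))
    (fun a => Real.sqrt ((a - δ : ℤ) : ℝ))
  have hg2R : ∑ a ∈ A', ((g a : ℤ) : ℝ) ^ 2 ≤ σ := by
    rw [hσ]
    have : ((∑ a ∈ A', (g a)^2 : ℤ) : ℝ) ≤ ((sigmaE G : ℤ) : ℝ) := by exact_mod_cast hg2σ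
    calc ∑ a ∈ A', ((g a : ℤ) : ℝ) ^ 2 = ((∑ a ∈ A', (g a)^2 : ℤ) : ℝ) := by push_cast; rfl
      _ ≤ _ := this
  have hw2R : ∑ a ∈ A', (Real.sqrt ((a - δ : ℤ) : ℝ)) ^ 2 ≤ 3 * n := by
    have : ∀ a ∈ A', (Real.sqrt ((a - δ : ℤ) : ℝ)) ^ 2 = ((a - δ : ℤ) : ℝ) := by
      intro a ha
      exact Real.sq_sqrt (hwnonneg a ha)
    rw [Finset.sum_congr rfl this]
    exact hWsum
  -- lower bound for the CS left side by telescoping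
  set H : ℤ → ℝ := fun x => ((x - δ : ℤ) : ℝ) * Real.sqrt ((x - δ : ℤ) : ℝ) with hH
  have hptwise : ∀ a ∈ A', (2/3 : ℝ) * (H a - H (fpred A a))
      ≤ ((g a : ℤ) : ℝ) * Real.sqrt ((a - δ : ℤ) : ℝ) := by
    intro a ha
    set X : ℝ := Real.sqrt ((a - δ : ℤ) : ℝ) with hX
    set Y : ℝ := Real.sqrt ((fpred A a - δ : ℤ) : ℝ) with hY
    have hwa : (0:ℝ) ≤ ((a - δ : ℤ) : ℝ) := hwnonneg a ha
    have hwp : (0:ℝ) ≤ ((fpred A a - δ : ℤ) : ℝ) := by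
      have := hpδ a ha
      have : (0:ℤ) ≤ fpred A a - δ := by omega
      exact_mod_cast this
    have hX2 : X ^ 2 = ((a - δ : ℤ) : ℝ) := Real.sq_sqrt hwa
    have hY2 : Y ^ 2 = ((fpred A a - δ : ℤ) : ℝ) := Real.sq_sqrt hwp
    have hX0 : 0 ≤ X := Real.sqrt_nonneg _
    have hY0 : 0 ≤ Y := Real.sqrt_nonneg _
    have hYX : Y ≤ X := by
      rw [hX, hY]
      apply Real.sqrt_le_sqrt
      have h1 := hplt a ha
      have : (fpred A a - δ : ℤ) ≤ (a - δ : ℤ) := by omega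
      exact_mod_cast this
    have hgR : ((g a : ℤ) : ℝ) = X ^ 2 - Y ^ 2 := by
      rw [hX2, hY2]
      simp only [hg]
      push_cast
      ring
    have hHa : H a = X ^ 2 * X := by rw [hH, hX2]
    have hHp : H (fpred A a) = Y ^ 2 * Y := by rw [hH, hY2]
    rw [hgR, hHa, hHp]
    nlinarith [mul_nonneg (sq_nonneg (X - Y)) (by linarith : (0:ℝ) ≤ X + 2 * Y)]
  have htelH : ∑ a ∈ A', (H a - H (fpred A a)) = sR * Real.sqrt sR := by
    have htl := tele (M := ℝ) H A.card A hAne rfl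
    rw [hmin', hmax'] at htl
    have h0 : H δ = 0 := by
      show ((δ - δ : ℤ) : ℝ) * Real.sqrt ((δ - δ : ℤ) : ℝ) = 0
      simp
    have hΔH : H Δ = sR * Real.sqrt sR := by
      show ((Δ - δ : ℤ) : ℝ) * Real.sqrt ((Δ - δ : ℤ) : ℝ) = sR * Real.sqrt sR
      rw [hsR]
    rw [htl, hΔH, h0, sub_zero]
  have hlhs : (2/3 : ℝ) * (sR * Real.sqrt sR)
      ≤ ∑ a ∈ A', ((g a : ℤ) : ℝ) * Real.sqrt ((a - δ : ℤ) : ℝ) := by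
    rw [← htelH, Finset.mul_sum]
    exact Finset.sum_le_sum hptwise
  -- combine
  have hlhs0 : 0 ≤ (2/3 : ℝ) * (sR * Real.sqrt sR) := by
    apply mul_nonneg (by norm_num)
    exact mul_nonneg hsR0 (Real.sqrt_nonneg _)
  have hkey : ((2/3 : ℝ) * (sR * Real.sqrt sR)) ^ 2 ≤ σ * (3 * n) := by
    calc ((2/3 : ℝ) * (sR * Real.sqrt sR)) ^ 2
        ≤ (∑ a ∈ A', ((g a : ℤ) : ℝ) * Real.sqrt ((a - δ : ℤ) : ℝ)) ^ 2 := by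
          apply pow_le_pow_left₀ hlhs0 hlhs
      _ ≤ (∑ a ∈ A', ((g a : ℤ) : ℝ) ^ 2) * ∑ a ∈ A', (Real.sqrt ((a - δ : ℤ) : ℝ)) ^ 2 := hCS
      _ ≤ σ * (3 * n) := by
          apply mul_le_mul hg2R hw2R (Finset.sum_nonneg (fun a _ => sq_nonneg _)) hσ0
  have hsqrt2 : (Real.sqrt sR) ^ 2 = sR := Real.sq_sqrt hsR0
  have hfinal : 4 * sR ^ 3 ≤ 27 * n * σ := by
    have hexp : ((2/3 : ℝ) * (sR * Real.sqrt sR)) ^ 2 = (4/9) * (sR^2 * (Real.sqrt sR)^2) := by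
      ring
    rw [hexp, hsqrt2] at hkey
    nlinarith [hkey]
  rw [hsR] at hfinal
  rw [hδ, hΔ] at hfinal
  calc 4 * (((dz G v - dz G u) : ℤ) : ℝ) ^ 3 ≤ 27 * n * σ := hfinal
    _ = 27 * (Fintype.card V : ℝ) * (sigmaE G : ℝ) := by rw [hn, hσ]

end CoreLemma



/-- For every connected finite simple graph `G` of order `n`,
`σ_t(G) ≤ √1.5 · n^{5/2} · σ(G)`. -/
theorem stmt11 {V : Type*} [Fintype V] (G : SimpleGraph V) (hG : G.Connected) :
    (sigmaT G : ℝ)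
      ≤ Real.sqrt 1.5 * (Fintype.card V : ℝ) ^ ((5 : ℝ) / 2) * (sigmaE G : ℝ) := by
  classical
  have hne : Nonempty V := hG.nonempty
  have hn1 : 1 ≤ Fintype.card V := Fintype.card_pos
  obtain ⟨u, -, hu⟩ := Finset.exists_min_image (Finset.univ : Finset V) (fun x => dz G x)
    ⟨Classical.arbitrary V, Finset.mem_univ _⟩
  obtain ⟨v, -, hv⟩ := Finset.exists_max_image (Finset.univ : Finset V) (fun x => dz G x)
    ⟨Classical.arbitrary V, Finset.mem_univ _⟩
  have hu' : ∀ x, dz G u ≤ dz G x := fun x => hu x (Finset.mem_univ x)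
  have hv' : ∀ x, dz G x ≤ dz G v := fun x => hv x (Finset.mem_univ x)
  obtain ⟨hsσ, hcube⟩ := core G hG u v hu' hv'
  have hBD := sigmaT_le_BD G (dz G v) (dz G u) hu' hv'
  set nR : ℝ := (Fintype.card V : ℝ) with hnRdef
  have hnR1 : (1:ℝ) ≤ nR := by rw [hnRdef]; exact_mod_cast hn1
  have hnR0 : (0:ℝ) < nR := by linarith
  set sR : ℝ := ((dz G v - dz G u : ℤ) : ℝ) with hsRdef
  set σR : ℝ := ((sigmaE G : ℤ) : ℝ) with hσRdef
  set tR : ℝ := ((sigmaT G : ℤ) : ℝ) with htRdef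
  have hσ0 : (0:ℝ) ≤ σR := by rw [hσRdef]; exact_mod_cast sigmaE_nonneg G
  have hs0 : (0:ℝ) ≤ sR := by
    rw [hsRdef]
    have : dz G u ≤ dz G v := hu' v
    exact_mod_cast sub_nonneg.mpr this
  have hsσR : sR ≤ σR := by rw [hsRdef, hσRdef]; exact_mod_cast hsσ
  have hcubeR : 4 * sR ^ 3 ≤ 27 * nR * σR := hcube
  have hBDR : 4 * tR ≤ nR ^ 2 * sR ^ 2 := by
    rw [htRdef, hsRdef, hnRdef]
    exact_mod_cast hBD
  have h4 : sR ^ 4 ≤ (27/4) * nR * σR ^ 2 := by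
    nlinarith [pow_nonneg hs0 3, hσ0, hsσR, hcubeR, hs0]
  have h5 : sR ^ 2 ≤ Real.sqrt ((27/4) * nR) * σR := by
    have e1 : sR ^ 2 = Real.sqrt ((sR ^ 2) ^ 2) := (Real.sqrt_sq (sq_nonneg sR)).symm
    have e2 : (sR ^ 2) ^ 2 = sR ^ 4 := by ring
    rw [e1, e2]
    calc Real.sqrt (sR ^ 4) ≤ Real.sqrt ((27/4) * nR * σR ^ 2) := Real.sqrt_le_sqrt h4
      _ = Real.sqrt ((27/4) * nR) * Real.sqrt (σR ^ 2) := by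
          rw [Real.sqrt_mul (by positivity)]
      _ = Real.sqrt ((27/4) * nR) * σR := by rw [Real.sqrt_sq hσ0]
  have hsplit : Real.sqrt ((27/4) * nR) = Real.sqrt (27/4) * Real.sqrt nR :=
    Real.sqrt_mul (by norm_num) _
  have hconst : Real.sqrt (27/4) ≤ 4 * Real.sqrt 1.5 := by
    have h24 : Real.sqrt (27/4) ≤ Real.sqrt 24 := Real.sqrt_le_sqrt (by norm_num)
    have h16 : Real.sqrt 24 = 4 * Real.sqrt 1.5 := by
      rw [show (24:ℝ) = 16 * 1.5 by norm_num, Real.sqrt_mul (by norm_num),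
        show (16:ℝ) = 4 ^ 2 by norm_num, Real.sqrt_sq (by norm_num)]
    linarith
  have hrpow : nR ^ ((5:ℝ)/2) = nR ^ 2 * Real.sqrt nR := by
    rw [show ((5:ℝ)/2) = ((2:ℕ):ℝ) + 1/2 by norm_num, Real.rpow_add hnR0,
      Real.rpow_natCast, ← Real.sqrt_eq_rpow]
  have hmain : tR ≤ (nR ^ 2 * sR ^ 2) / 4 := by linarith
  have hstep : nR ^ 2 * sR ^ 2 ≤ nR ^ 2 * (Real.sqrt (27/4) * Real.sqrt nR * σR) := by
    apply mul_le_mul_of_nonneg_left _ (by positivity)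
    calc sR ^ 2 ≤ Real.sqrt ((27/4) * nR) * σR := h5
      _ = Real.sqrt (27/4) * Real.sqrt nR * σR := by rw [hsplit]
  show tR ≤ Real.sqrt 1.5 * nR ^ ((5:ℝ)/2) * σR
  calc tR ≤ (nR ^ 2 * sR ^ 2) / 4 := hmain
    _ ≤ (nR ^ 2 * (Real.sqrt (27/4) * Real.sqrt nR * σR)) / 4 := by linarith
    _ ≤ Real.sqrt 1.5 * (nR ^ 2 * Real.sqrt nR) * σR := by
        have hpos : (0:ℝ) ≤ nR ^ 2 * Real.sqrt nR * σR := by positivity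
        nlinarith [mul_le_mul_of_nonneg_right hconst hpos,
          Real.sqrt_nonneg (1.5 : ℝ), Real.sqrt_nonneg nR, sq_nonneg nR]
    _ = Real.sqrt 1.5 * nR ^ ((5:ℝ)/2) * σR := by rw [hrpow]; try ring
end

section
/- Let k ≥ 8 be an even number. For every r with 4 ≤ r ≤ k − 4, there exists a connected finite simple graph of order k in which every vertex has degree r except exactly one vertex, which has degree r − 2. -/
open Finset
open scoped Classical

namespace Stmt14Aux

/-- The jump predicate for our near-regular circulant construction. -/
def Pf (k r d : ℕ) : Prop :=
  (1 ≤ d ∧ d ≤ r / 2) ∨ (k - r / 2 ≤ d ∧ 1 ≤ d ∧ d ≤ k - 1) ∨ (r % 2 = 1 ∧ 2 * d = k ∧ 1 ≤ d)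

/-- The special vertex `A`. -/
def AV (k r : ℕ) : ZMod k := ((if r % 2 = 1 then k / 2 else r / 2 : ℕ) : ZMod k)

/-- The special vertex `B = -1`. -/
def BV (k : ℕ) : ZMod k := ((k - 1 : ℕ) : ZMod k)

/-- The adjacency relation: circulant edges, minus `{0,A}` and `{0,B}`, plus `{A,B}`. -/
def rel (k r : ℕ) (u v : ZMod k) : Prop :=
  (Pf k r ((u - v).val) ∧
    ¬((u = 0 ∧ v = AV k r) ∨ (u = AV k r ∧ v = 0) ∨ (u = 0 ∧ v = BV k) ∨ (v = 0 ∧ u = BV k)))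
  ∨ ((u = AV k r ∧ v = BV k) ∨ (v = AV k r ∧ u = BV k))

theorem aux (k r : ℕ) [NeZero k] (hk : 8 ≤ k) (hke : k % 2 = 0) (hr4 : 4 ≤ r)
    (hrk : r ≤ k - 4) :
    ∃ G : SimpleGraph (ZMod k), G.Connected ∧
      ∃ v₀ : ZMod k, G.degree v₀ = r - 2 ∧ ∀ v : ZMod k, v ≠ v₀ → G.degree v = r := by
  have hr2 : r % 2 = 0 ∨ r % 2 = 1 := by omega
  set a : ℕ := if r % 2 = 1 then k / 2 else r / 2 with ha
  have havals : (r % 2 = 0 ∧ a = r / 2) ∨ (r % 2 = 1 ∧ a = k / 2) := by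
    rcases hr2 with h | h
    · exact Or.inl ⟨h, by rw [ha, h]; simp⟩
    · exact Or.inr ⟨h, by rw [ha, h]; simp⟩
  -- basic numeric facts
  have ha_lb : 2 ≤ a := by rcases havals with ⟨h1, h2⟩ | ⟨h1, h2⟩ <;> omega
  have ha_ub : a ≤ k - 2 := by rcases havals with ⟨h1, h2⟩ | ⟨h1, h2⟩ <;> omega
  -- Pf facts
  have haP : Pf k r a := by
    rcases havals with ⟨h1, h2⟩ | ⟨h1, h2⟩ <;> simp only [Pf] <;> omega
  have hbP : Pf k r (k - 1) := by simp only [Pf]; omega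
  have h1P : Pf k r 1 := by simp only [Pf]; omega
  have hkaP : Pf k r (k - a) := by
    rcases havals with ⟨h1, h2⟩ | ⟨h1, h2⟩ <;> simp only [Pf] <;> omega
  have hnBA : ¬ Pf k r (k - 1 - a) := by
    rcases havals with ⟨h1, h2⟩ | ⟨h1, h2⟩ <;> simp only [Pf] <;> omega
  have hnAB : ¬ Pf k r (a + 1) := by
    rcases havals with ⟨h1, h2⟩ | ⟨h1, h2⟩ <;> simp only [Pf] <;> omega
  have hP0 : ¬ Pf k r 0 := by simp only [Pf]; omega
  have hPsymm : ∀ d, 1 ≤ d → d ≤ k - 1 → Pf k r d → Pf k r (k - d) := by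
    intro d h1 h2; simp only [Pf]; omega
  -- ZMod.val facts
  have hvlt : ∀ u : ZMod k, u.val < k := fun u => ZMod.val_lt u
  have hcastval : ∀ i : ℕ, i < k → ((i : ZMod k)).val = i := fun i hi => ZMod.val_cast_of_lt hi
  have hsubval : ∀ i j : ℕ, j ≤ i → i < k → ((i : ZMod k) - (j : ZMod k)).val = i - j := by
    intro i j hji hi
    rw [← Nat.cast_sub hji, hcastval _ (by omega)]
  have hflipval : ∀ u v : ZMod k, u ≠ v → (u - v).val = k - (v - u).val := by
    intro u v huv
    have h1 : u - v = -(v - u) := by ring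
    have h2 : v - u ≠ 0 := sub_ne_zero.mpr (Ne.symm huv)
    rw [h1, ZMod.neg_val, if_neg h2]
  have hvalne : ∀ u : ZMod k, u ≠ 0 → 1 ≤ u.val ∧ u.val ≤ k - 1 := by
    intro u hu
    have h1 := hvlt u
    have h2 : u.val ≠ 0 := fun h => hu ((ZMod.val_eq_zero u).mp h)
    omega
  have hPflip : ∀ u v : ZMod k, Pf k r ((u - v).val) → Pf k r ((v - u).val) := by
    intro u v hp
    by_cases huv : u = v
    · subst huv; exact hp
    · have h2 := hflipval v u (Ne.symm huv)
      have h3 := hvalne _ (sub_ne_zero.mpr huv)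
      rw [h2]
      exact hPsymm _ h3.1 h3.2 hp
  -- the special vertices
  have hAVa : AV k r = (a : ZMod k) := rfl
  have hAval : (AV k r).val = a := by rw [hAVa]; exact hcastval a (by omega)
  have hBval : (BV k).val = k - 1 := hcastval _ (by omega)
  have hA0 : AV k r ≠ 0 := by
    intro h; have h' := hAval; rw [h, ZMod.val_zero] at h'; omega
  have hB0 : BV k ≠ 0 := by
    intro h; have h' := hBval; rw [h, ZMod.val_zero] at h'; omega
  have hAB : AV k r ≠ BV k := by
    intro h
    have h' : a = k - 1 := by rw [← hAval, h, hBval]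
    omega
  have hBA : (BV k - AV k r).val = k - 1 - a := by
    rw [hAVa]; unfold BV; exact hsubval (k-1) a (by omega) (by omega)
  have hBAne : BV k - AV k r ≠ 0 := by
    intro h; have h' := hBA; rw [h, ZMod.val_zero] at h'; omega
  have hABval : (AV k r - BV k).val = a + 1 := by
    have h1 : AV k r - BV k = -(BV k - AV k r) := by ring
    rw [h1, ZMod.neg_val, if_neg hBAne, hBA]; omega
  have h0A : ((0 : ZMod k) - AV k r).val = k - a := by
    rw [zero_sub, ZMod.neg_val, if_neg hA0, hAval]
  have h0B : ((0 : ZMod k) - BV k).val = 1 := by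
    rw [zero_sub, ZMod.neg_val, if_neg hB0, hBval]; omega
  -- the graph
  set G : SimpleGraph (ZMod k) := SimpleGraph.fromRel (rel k r) with hG
  have hAdj : ∀ u v, G.Adj u v ↔ u ≠ v ∧ rel k r u v := by
    intro u v
    rw [hG, SimpleGraph.fromRel_adj]
    constructor
    · rintro ⟨hne, h | h⟩
      · exact ⟨hne, h⟩
      · refine ⟨hne, ?_⟩
        rcases h with ⟨hp, hrem⟩ | hplus
        · refine Or.inl ⟨hPflip v u hp, fun hc => hrem ?_⟩
          rcases hc with ⟨h1, h2⟩ | ⟨h1, h2⟩ | ⟨h1, h2⟩ | ⟨h1, h2⟩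
          · exact Or.inr (Or.inl ⟨h2, h1⟩)
          · exact Or.inl ⟨h2, h1⟩
          · exact Or.inr (Or.inr (Or.inr ⟨h1, h2⟩))
          · exact Or.inr (Or.inr (Or.inl ⟨h1, h2⟩))
        · rcases hplus with ⟨h1, h2⟩ | ⟨h1, h2⟩
          · exact Or.inr (Or.inr ⟨h1, h2⟩)
          · exact Or.inr (Or.inl ⟨h1, h2⟩)
        
    · rintro ⟨hne, h⟩; exact ⟨hne, Or.inl h⟩
  -- counting the jump set
  have hScard : (univ.filter (fun u : ZMod k => Pf k r u.val)).card = r := by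
    have h1 : (univ.filter (fun u : ZMod k => Pf k r u.val)).card
        = ((Finset.range k).filter (Pf k r)).card := by
      apply Finset.card_bij (fun u _ => ZMod.val u)
      · intro u hu
        simp only [Finset.mem_filter, Finset.mem_univ, true_and, Finset.mem_range] at *
        exact ⟨hvlt u, hu⟩
      · intro u _ v _ h
        exact ZMod.val_injective k h
      · intro d hd
        simp only [Finset.mem_filter, Finset.mem_range] at hd
        refine ⟨(d : ZMod k), ?_, hcastval d hd.1⟩
        simp only [Finset.mem_filter, Finset.mem_univ, true_and]
        rw [hcastval d hd.1]; exact hd.2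
    rw [h1]
    rcases hr2 with h | h
    · have hset : (Finset.range k).filter (Pf k r)
          = Finset.Icc 1 (r / 2) ∪ Finset.Icc (k - r / 2) (k - 1) := by
        ext d
        simp only [Finset.mem_filter, Finset.mem_range, Finset.mem_union, Finset.mem_Icc, Pf]
        omega
      rw [hset, Finset.card_union_of_disjoint, Nat.card_Icc, Nat.card_Icc]
      · omega
      · rw [Finset.disjoint_left]
        intro x hx hx'
        simp only [Finset.mem_Icc] at hx hx'
        omega
    · have hset : (Finset.range k).filter (Pf k r)
          = (Finset.Icc 1 (r / 2) ∪ Finset.Icc (k - r / 2) (k - 1)) ∪ {k / 2} := by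
        ext d
        simp only [Finset.mem_filter, Finset.mem_range, Finset.mem_union, Finset.mem_Icc,
          Finset.mem_singleton, Pf]
        omega
      rw [hset, Finset.card_union_of_disjoint, Finset.card_union_of_disjoint,
        Nat.card_Icc, Nat.card_Icc, Finset.card_singleton]
      · omega
      · rw [Finset.disjoint_left]
        intro x hx hx'
        simp only [Finset.mem_Icc] at hx hx'
        omega
      · rw [Finset.disjoint_left]
        intro x hx hx'
        simp only [Finset.mem_union, Finset.mem_Icc, Finset.mem_singleton] at hx hx'
        omega
  have hcard : ∀ v : ZMod k,
      (univ.filter (fun w : ZMod k => Pf k r ((w - v).val))).card = r := by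
    intro v
    have hbij : (univ.filter (fun w : ZMod k => Pf k r ((w - v).val))).card
        = (univ.filter (fun u : ZMod k => Pf k r u.val)).card := by
      apply Finset.card_bij (fun (w : ZMod k) _ => w - v)
      · intro w hw
        simp only [Finset.mem_filter, Finset.mem_univ, true_and] at *
        exact hw
      · intro w₁ _ w₂ _ h
        exact sub_left_injective h
      · intro u hu
        simp only [Finset.mem_filter, Finset.mem_univ, true_and] at hu
        refine ⟨u + v, ?_, by rw [add_sub_cancel_right]⟩
        simp only [Finset.mem_filter, Finset.mem_univ, true_and, add_sub_cancel_right]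
        exact hu
    rw [hbij, hScard]
  have hNF : ∀ v : ZMod k, G.degree v = (univ.filter (G.Adj v)).card := by
    intro v
    rw [← SimpleGraph.card_neighborFinset_eq_degree, SimpleGraph.neighborFinset_eq_filter]
  -- generic degree
  have hdeg_gen : ∀ v : ZMod k, v ≠ 0 → v ≠ AV k r → v ≠ BV k → G.degree v = r := by
    intro v h0 hA' hB'
    rw [hNF]; refine Eq.trans ?_ (hcard v)
    congr 1
    ext w
    simp only [Finset.mem_filter, Finset.mem_univ, true_and, hAdj]
    constructor
    · rintro ⟨hne, hrel⟩
      rcases hrel with ⟨hp, -⟩ | hplus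
      · exact hPflip v w hp
      · exfalso; tauto
    · intro hp
      have hwv : w ≠ v := by
        intro h; rw [h, sub_self, ZMod.val_zero] at hp; exact hP0 hp
      refine ⟨Ne.symm hwv, Or.inl ⟨hPflip w v hp, ?_⟩⟩
      rintro (⟨h1, -⟩ | ⟨h1, -⟩ | ⟨h1, -⟩ | ⟨-, h1⟩)
      · exact h0 h1
      · exact hA' h1
      · exact h0 h1
      · exact hB' h1
  -- degree of 0
  have hdeg0 : G.degree 0 = r - 2 := by
    rw [hNF]
    have hA0' : (0 : ZMod k) ≠ AV k r := Ne.symm hA0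
    have hB0' : (0 : ZMod k) ≠ BV k := Ne.symm hB0
    have hset : univ.filter (G.Adj 0)
        = (univ.filter (fun w : ZMod k => Pf k r ((w - 0).val))) \ {AV k r, BV k} := by
      ext w
      simp only [Finset.mem_filter, Finset.mem_univ, true_and, Finset.mem_sdiff,
        Finset.mem_insert, Finset.mem_singleton, hAdj]
      constructor
      · rintro ⟨hne, hrel⟩
        rcases hrel with ⟨hp, hrem⟩ | hplus
        · refine ⟨hPflip 0 w hp, ?_⟩
          rintro (h | h)
          · exact hrem (Or.inl ⟨rfl, h⟩)
          · exact hrem (Or.inr (Or.inr (Or.inl ⟨rfl, h⟩)))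
        · rcases hplus with ⟨h1, -⟩ | ⟨-, h1⟩
          · exact absurd h1 hA0'
          · exact absurd h1 hB0'
      · rintro ⟨hp, hw⟩
        have hwv : w ≠ 0 := by
          intro h; rw [h, sub_self, ZMod.val_zero] at hp; exact hP0 hp
        refine ⟨Ne.symm hwv, Or.inl ⟨hPflip w 0 hp, ?_⟩⟩
        rintro (⟨-, h1⟩ | ⟨h1, -⟩ | ⟨-, h1⟩ | ⟨h1, -⟩)
        · exact hw (Or.inl h1)
        · exact hA0' h1
        · exact hw (Or.inr h1)
        · exact hwv h1
    have hsub : {AV k r, BV k} ⊆ univ.filter (fun w : ZMod k => Pf k r ((w - 0).val)) := by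
      intro x hx
      simp only [Finset.mem_insert, Finset.mem_singleton] at hx
      simp only [Finset.mem_filter, Finset.mem_univ, true_and]
      rcases hx with rfl | rfl
      · rw [sub_zero, hAval]; exact haP
      · rw [sub_zero, hBval]; exact hbP
    rw [hset, Finset.card_sdiff_of_subset hsub, hcard 0,
      Finset.card_insert_of_notMem (by simpa using hAB), Finset.card_singleton]
  -- degree of A
  have hdegA : G.degree (AV k r) = r := by
    rw [hNF]
    have hset : univ.filter (G.Adj (AV k r))
        = ((univ.filter (fun w : ZMod k => Pf k r ((w - AV k r).val))) \ {0}) ∪ {BV k} := by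
      ext w
      simp only [Finset.mem_filter, Finset.mem_univ, true_and, Finset.mem_union,
        Finset.mem_sdiff, Finset.mem_singleton, hAdj]
      constructor
      · rintro ⟨hne, hrel⟩
        rcases hrel with ⟨hp, hrem⟩ | hplus
        · left
          refine ⟨hPflip _ w hp, ?_⟩
          intro h; exact hrem (Or.inr (Or.inl ⟨rfl, h⟩))
        · rcases hplus with ⟨-, h1⟩ | ⟨-, h1⟩
          · exact Or.inr h1
          · exact absurd h1 hAB
      · rintro (⟨hp, hw0⟩ | rfl)
        · have hwA : w ≠ AV k r := by
            intro h; rw [h, sub_self, ZMod.val_zero] at hp; exact hP0 hp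
          refine ⟨Ne.symm hwA, Or.inl ⟨hPflip w _ hp, ?_⟩⟩
          rintro (⟨h1, -⟩ | ⟨-, h1⟩ | ⟨h1, -⟩ | ⟨h1, -⟩)
          · exact hA0 h1
          · exact hw0 h1
          · exact hA0 h1
          · exact hw0 h1
        · exact ⟨hAB, Or.inr (Or.inl ⟨rfl, rfl⟩)⟩
    have hsub : {(0 : ZMod k)} ⊆ univ.filter (fun w : ZMod k => Pf k r ((w - AV k r).val)) := by
      simp only [Finset.singleton_subset_iff, Finset.mem_filter, Finset.mem_univ, true_and]
      rw [h0A]; exact hkaP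
    have hdisj : Disjoint ((univ.filter (fun w : ZMod k => Pf k r ((w - AV k r).val))) \ {0})
        {BV k} := by
      rw [Finset.disjoint_singleton_right]
      intro hmem
      simp only [Finset.mem_sdiff, Finset.mem_filter, Finset.mem_univ, true_and,
        Finset.mem_singleton] at hmem
      rw [hBA] at hmem
      exact hnBA hmem.1
    rw [hset, Finset.card_union_of_disjoint hdisj, Finset.card_sdiff_of_subset hsub, hcard _,
      Finset.card_singleton, Finset.card_singleton]
    omega
  -- degree of B
  have hdegB : G.degree (BV k) = r := by
    rw [hNF]
    have hset : univ.filter (G.Adj (BV k))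
        = ((univ.filter (fun w : ZMod k => Pf k r ((w - BV k).val))) \ {0}) ∪ {AV k r} := by
      ext w
      simp only [Finset.mem_filter, Finset.mem_univ, true_and, Finset.mem_union,
        Finset.mem_sdiff, Finset.mem_singleton, hAdj]
      constructor
      · rintro ⟨hne, hrel⟩
        rcases hrel with ⟨hp, hrem⟩ | hplus
        · left
          refine ⟨hPflip _ w hp, ?_⟩
          intro h; exact hrem (Or.inr (Or.inr (Or.inr ⟨h, rfl⟩)))
        · rcases hplus with ⟨h1, -⟩ | ⟨h1, -⟩
          · exact absurd h1.symm hAB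
          · exact Or.inr h1
      · rintro (⟨hp, hw0⟩ | rfl)
        · have hwB : w ≠ BV k := by
            intro h; rw [h, sub_self, ZMod.val_zero] at hp; exact hP0 hp
          refine ⟨Ne.symm hwB, Or.inl ⟨hPflip w _ hp, ?_⟩⟩
          rintro (⟨h1, -⟩ | ⟨-, h1⟩ | ⟨h1, -⟩ | ⟨h1, -⟩)
          · exact hB0 h1
          · exact hw0 h1
          · exact hB0 h1
          · exact hw0 h1
        · exact ⟨Ne.symm hAB, Or.inr (Or.inr ⟨rfl, rfl⟩)⟩
    have hsub : {(0 : ZMod k)} ⊆ univ.filter (fun w : ZMod k => Pf k r ((w - BV k).val)) := by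
      simp only [Finset.singleton_subset_iff, Finset.mem_filter, Finset.mem_univ, true_and]
      rw [h0B]; exact h1P
    have hdisj : Disjoint ((univ.filter (fun w : ZMod k => Pf k r ((w - BV k).val))) \ {0})
        {AV k r} := by
      rw [Finset.disjoint_singleton_right]
      intro hmem
      simp only [Finset.mem_sdiff, Finset.mem_filter, Finset.mem_univ, true_and,
        Finset.mem_singleton] at hmem
      rw [hABval] at hmem
      exact hnAB hmem.1
    rw [hset, Finset.card_union_of_disjoint hdisj, Finset.card_sdiff_of_subset hsub, hcard _,
      Finset.card_singleton, Finset.card_singleton]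
    omega
  -- connectivity
  have hstep : ∀ i : ℕ, 1 ≤ i → i ≤ k - 2 → G.Adj (i : ZMod k) ((i + 1 : ℕ) : ZMod k) := by
    intro i h1 h2
    have hine : ((i : ℕ) : ZMod k) ≠ ((i + 1 : ℕ) : ZMod k) := by
      intro h
      have h' := congrArg ZMod.val h
      rw [hcastval i (by omega), hcastval (i+1) (by omega)] at h'
      omega
    have hi0 : ((i : ℕ) : ZMod k) ≠ 0 := by
      intro h
      have h' := congrArg ZMod.val h
      rw [hcastval i (by omega), ZMod.val_zero] at h'
      omega
    have hi10 : ((i + 1 : ℕ) : ZMod k) ≠ 0 := by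
      intro h
      have h' := congrArg ZMod.val h
      rw [hcastval (i+1) (by omega), ZMod.val_zero] at h'
      omega
    rw [hAdj]
    refine ⟨hine, Or.inl ⟨?_, ?_⟩⟩
    · have hv : (((i + 1 : ℕ) : ZMod k) - ((i : ℕ) : ZMod k)).val = 1 := by
        rw [hsubval (i+1) i (by omega) (by omega)]; omega
      rw [hflipval _ _ hine, hv]
      exact hbP
    · rintro (⟨h, -⟩ | ⟨-, h⟩ | ⟨h, -⟩ | ⟨h, -⟩)
      · exact hi0 h
      · exact hi10 h
      · exact hi0 h
      · exact hi10 h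
  have hadj01 : G.Adj ((0 : ℕ) : ZMod k) ((1 : ℕ) : ZMod k) := by
    have hne : ((0 : ℕ) : ZMod k) ≠ ((1 : ℕ) : ZMod k) := by
      intro h
      have h' := congrArg ZMod.val h
      rw [hcastval 0 (by omega), hcastval 1 (by omega)] at h'
      omega
    rw [hAdj]
    refine ⟨hne, Or.inl ⟨?_, ?_⟩⟩
    · have hv : (((1 : ℕ) : ZMod k) - ((0 : ℕ) : ZMod k)).val = 1 := by
        rw [hsubval 1 0 (by omega) (by omega)]
      rw [hflipval _ _ hne, hv]
      exact hbP
    · rintro (⟨-, h⟩ | ⟨h, -⟩ | ⟨-, h⟩ | ⟨h, -⟩)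
      · have h' := congrArg ZMod.val h
        rw [hcastval 1 (by omega), hAval] at h'
        omega
      · rw [Nat.cast_zero] at h
        exact hA0 h.symm
      · have h' := congrArg ZMod.val h
        rw [hcastval 1 (by omega), hBval] at h'
        omega
      · have h' := congrArg ZMod.val h
        rw [hcastval 1 (by omega), ZMod.val_zero] at h'
        omega
  have hreach : ∀ i : ℕ, i ≤ k - 1 → G.Reachable 0 ((i : ℕ) : ZMod k) := by
    intro i
    induction i with
    | zero =>
      intro _
      simpa using SimpleGraph.Reachable.refl (0 : ZMod k)
    | succ i ih =>
      intro hle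
      have hreach' := ih (by omega)
      by_cases hi : i = 0
      · subst hi
        have hr01 : G.Reachable ((0 : ℕ) : ZMod k) ((1 : ℕ) : ZMod k) := hadj01.reachable
        simpa using hr01
      · exact hreach'.trans (hstep i (by omega) (by omega)).reachable
  have hcastv : ∀ u : ZMod k, ((u.val : ℕ) : ZMod k) = u := by
    intro u
    rw [ZMod.natCast_val, ZMod.cast_id]
  have hconn : G.Connected := by
    rw [SimpleGraph.connected_iff]
    refine ⟨?_, ⟨0⟩⟩
    intro u v
    have hu := hreach u.val (by have := hvlt u; omega)
    have hv := hreach v.val (by have := hvlt v; omega)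
    rw [hcastv u] at hu
    rw [hcastv v] at hv
    exact hu.symm.trans hv
  refine ⟨G, hconn, 0, by convert hdeg0, ?_⟩
  intro v hv
  by_cases h1 : v = AV k r
  · rw [h1]; convert hdegA
  · by_cases h2 : v = BV k
    · rw [h2]; convert hdegB
    · convert hdeg_gen v hv h1 h2

end Stmt14Aux

/-- For every even `k ≥ 8` and every `4 ≤ r ≤ k - 4` there is a connected graph of order `k`
all of whose vertices have degree `r`, except exactly one vertex of degree `r - 2`. -/
theorem stmt14 (k r : ℕ) (hk : 8 ≤ k) (hke : Even k) (hr4 : 4 ≤ r) (hrk : r ≤ k - 4) :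
    ∃ G : SimpleGraph (Fin k), G.Connected ∧
      ∃ v₀ : Fin k, G.degree v₀ = r - 2 ∧ ∀ v : Fin k, v ≠ v₀ → G.degree v = r := by
  haveI : NeZero k := ⟨by omega⟩
  have hke' : k % 2 = 0 := Nat.even_iff.mp hke
  obtain ⟨G, hGc, v₀, hd0, hdr⟩ := Stmt14Aux.aux k r hk hke' hr4 hrk
  let e : ZMod k ≃ Fin k := Fintype.equivFinOfCardEq (ZMod.card k)
  let φ : (G.comap e.symm.toEmbedding) ≃g G := SimpleGraph.Iso.comap e.symm G
  have hdeg : ∀ x : Fin k, (G.comap e.symm.toEmbedding).degree x = G.degree (e.symm x) := by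
    intro x
    rw [← SimpleGraph.card_neighborSet_eq_degree, ← SimpleGraph.card_neighborSet_eq_degree]
    exact Fintype.card_congr (φ.mapNeighborSet x)
  refine ⟨G.comap e.symm.toEmbedding, φ.connected_iff.mpr hGc, e v₀, ?_, ?_⟩
  · have h := hdeg (e v₀); rw [Equiv.symm_apply_apply] at h; convert h.trans hd0
  · intro v hv
    convert (hdeg v).trans (hdr _ (fun h => hv (by rw [← h, Equiv.apply_symm_apply])))
end

section
/- Let T be a tree all of whose vertex degrees lie in {1, 2, 3}, with exactly x ≥ 1 vertices of degree 3 and y vertices of degree 2 (so that T has exactly x + 2 leaves and order n = 2x + y + 2). Then σ_t(T) = 4x(x + 2) + 2y(x + 1). -/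
open Finset
open scoped Classical

lemma two_mul_sigmaT {V : Type*} [Fintype V] (G : SimpleGraph V) :
    2 * sigmaT G = ∑ u : V, ∑ v : V, ((G.degree u : ℤ) - (G.degree v : ℤ)) ^ 2 := by
  classical
  set f : Sym2 V → ℤ := Sym2.lift ⟨fun u v => ((G.degree u : ℤ) - (G.degree v : ℤ)) ^ 2,
      fun u v => by simp only []; ring⟩ with hf
  have himg : ((Finset.univ : Finset V).offDiag).image (fun a : V × V => s(a.1, a.2))
      = (Finset.univ : Finset V).sym2.filter (fun p => ¬ p.IsDiag) := by
    ext p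
    induction p using Sym2.ind with
    | _ u v =>
      simp only [Finset.mem_image, Finset.mem_filter, Finset.mem_offDiag, Finset.mem_univ,
        true_and, Sym2.mk_isDiag_iff, Finset.mk_mem_sym2_iff, and_true]
      constructor
      · rintro ⟨⟨a, b⟩, hab, h⟩
        replace h := (Sym2.mk_eq_mk_iff (p := (a, b)) (q := (u, v))).mp h
        rcases h with h | h <;> simp_all [Prod.swap] <;> tauto
      · intro h; exact ⟨(u, v), h, rfl⟩
  have hfib : ∀ p ∈ (Finset.univ : Finset V).sym2.filter (fun p => ¬ p.IsDiag),
      ((Finset.univ : Finset V).offDiag.filter (fun a : V × V => s(a.1, a.2) = p)).card = 2 := by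
    intro p hp
    induction p using Sym2.ind with
    | _ u v =>
      simp only [Finset.mem_filter, Sym2.mk_isDiag_iff] at hp
      have huv : u ≠ v := hp.2
      have : (Finset.univ : Finset V).offDiag.filter (fun a : V × V => s(a.1, a.2) = s(u, v))
          = {(u, v), (v, u)} := by
        ext ⟨a, b⟩
        simp only [Finset.mem_filter, Finset.mem_offDiag, Finset.mem_univ, true_and,
          Sym2.mk_eq_mk_iff, Sym2.eq_iff, Finset.mem_insert, Finset.mem_singleton, Prod.mk.injEq,
          Prod.swap_prod_mk]
        constructor
        · rintro ⟨_, h | h⟩ <;> simp_all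
        · rintro (⟨rfl, rfl⟩ | ⟨rfl, rfl⟩) <;> simp [huv, huv.symm]
      rw [this]
      rw [Finset.card_insert_of_notMem (by simp [huv]), Finset.card_singleton]
  have hsum : ∑ a ∈ (Finset.univ : Finset V).offDiag, f s(a.1, a.2) = 2 * sigmaT G := by
    rw [Finset.sum_comp f (fun a : V × V => s(a.1, a.2)), himg, sigmaT, Finset.mul_sum]
    refine Finset.sum_congr rfl fun p hp => ?_
    rw [hfib p hp]
    simp [two_nsmul, two_mul, hf]
  rw [← hsum]
  have hdiag : ∀ a ∈ (Finset.univ : Finset V) ×ˢ (Finset.univ : Finset V),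
      a ∉ (Finset.univ : Finset V).offDiag → f s(a.1, a.2) = 0 := by
    rintro ⟨a, b⟩ _ h
    simp only [Finset.mem_offDiag, Finset.mem_univ, true_and, not_ne_iff] at h
    subst h
    simp [hf]
  rw [Finset.sum_subset (by intro a ha; simp_all [Finset.mem_offDiag]) hdiag,
    Finset.sum_product]
  rfl

/-- For a tree with all degrees in `{1,2,3}`, exactly `x ≥ 1` vertices of degree `3` and `y`
vertices of degree `2` (hence `x + 2` leaves and order `n = 2x + y + 2`),
`σ_t(T) = 4x(x+2) + 2y(x+1)`. -/
theorem stmt16 {V : Type*} [Fintype V] (G : SimpleGraph V) (hT : G.IsTree)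
    (hdeg : ∀ v : V, G.degree v ∈ ({1, 2, 3} : Set ℕ)) (x y : ℕ) (hx1 : 1 ≤ x)
    (hx : (Finset.univ.filter fun v : V => G.degree v = 3).card = x)
    (hy : (Finset.univ.filter fun v : V => G.degree v = 2).card = y)
    (hleaf : (Finset.univ.filter fun v : V => G.degree v = 1).card = x + 2)
    (hn : Fintype.card V = 2 * x + y + 2) :
    sigmaT G = 4 * (x : ℤ) * ((x : ℤ) + 2) + 2 * (y : ℤ) * ((x : ℤ) + 1) := by
  classical
  have hcases : ∀ v : V, G.degree v = 1 ∨ G.degree v = 2 ∨ G.degree v = 3 := by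
    intro v; simpa using hdeg v
  -- compute sums of degree powers
  have key : ∀ g : ℕ → ℤ, ∑ v : V, g (G.degree v) =
      (x + 2 : ℤ) * g 1 + (y : ℤ) * g 2 + (x : ℤ) * g 3 := by
    intro g
    rw [← Finset.sum_filter_add_sum_filter_not Finset.univ (fun v => G.degree v = 1)]
    rw [← Finset.sum_filter_add_sum_filter_not
      (Finset.univ.filter fun v => ¬ G.degree v = 1) (fun v => G.degree v = 2)]
    have h1 : ∑ v ∈ Finset.univ.filter (fun v : V => G.degree v = 1), g (G.degree v)
        = (x + 2 : ℤ) * g 1 := by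
      rw [Finset.sum_congr rfl (fun v hv => by
        simp only [Finset.mem_filter] at hv; rw [hv.2]), Finset.sum_const, hleaf]
      push_cast; ring
    have e2 : ((Finset.univ.filter fun v : V => ¬ G.degree v = 1).filter
        fun v => G.degree v = 2) = Finset.univ.filter fun v : V => G.degree v = 2 := by
      rw [Finset.filter_filter]
      apply Finset.filter_congr
      intro v _
      constructor
      · tauto
      · intro h; exact ⟨by omega, h⟩
    have h2 : ∑ v ∈ ((Finset.univ.filter fun v : V => ¬ G.degree v = 1).filter
        fun v => G.degree v = 2), g (G.degree v) = (y : ℤ) * g 2 := by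
      rw [e2, Finset.sum_congr rfl (fun v hv => by
        simp only [Finset.mem_filter] at hv; rw [hv.2]), Finset.sum_const, hy]
      push_cast; ring
    have e3 : ((Finset.univ.filter fun v : V => ¬ G.degree v = 1).filter
        fun v => ¬ G.degree v = 2) = Finset.univ.filter fun v : V => G.degree v = 3 := by
      rw [Finset.filter_filter]
      apply Finset.filter_congr
      intro v _
      rcases hcases v with h | h | h <;> simp [h]
    have h3 : ∑ v ∈ ((Finset.univ.filter fun v : V => ¬ G.degree v = 1).filter
        fun v => ¬ G.degree v = 2), g (G.degree v) = (x : ℤ) * g 3 := by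
      rw [e3, Finset.sum_congr rfl (fun v hv => by
        simp only [Finset.mem_filter] at hv; rw [hv.2]), Finset.sum_const, hx]
      push_cast; ring
    rw [h1, h2, h3]; ring
  have hS1 : ∑ v : V, (G.degree v : ℤ) = 4 * x + 2 * y + 2 := by
    have := key (fun n => (n : ℤ))
    rw [this]; push_cast; ring
  have hS2 : ∑ v : V, (G.degree v : ℤ) ^ 2 = 10 * x + 4 * y + 2 := by
    have := key (fun n => (n : ℤ) ^ 2)
    rw [this]; push_cast; ring
  have hdouble : ∑ u : V, ∑ v : V, ((G.degree u : ℤ) - (G.degree v : ℤ)) ^ 2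
      = 2 * (Fintype.card V : ℤ) * (∑ v : V, (G.degree v : ℤ) ^ 2)
        - 2 * (∑ v : V, (G.degree v : ℤ)) ^ 2 := by
    simp only [sub_sq]
    simp only [Finset.sum_add_distrib, Finset.sum_sub_distrib, Finset.sum_const,
      ← Finset.mul_sum, ← Finset.sum_mul, Finset.card_univ, nsmul_eq_mul]
    ring
  have h2s := two_mul_sigmaT G
  rw [hdouble, hS1, hS2, hn] at h2s
  have : sigmaT G = 4 * (x : ℤ) * ((x : ℤ) + 2) + 2 * (y : ℤ) * ((x : ℤ) + 1) := by
    push_cast at h2s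
    linarith
  exact this
end

section
/- Let T be a tree all of whose vertex degrees lie in {1, 2, 3}, with exactly x ≥ 1 vertices of degree 3 (so that T has exactly x + 2 leaves). Then σ(T) ≥ 2(x + 2). -/
open Finset
open scoped Classical

section AuxStmt17
open SimpleGraph Walk
set_option linter.unusedSectionVars false
set_option linter.unnecessarySimpa false
set_option linter.unreachableTactic false
set_option linter.unusedTactic false
set_option linter.unnecessarySeqFocus false
variable {V : Type*} [Fintype V] {G : SimpleGraph V}

-- basic walk closure
lemma walk_closed {S : Set V} (hS : ∀ a ∈ S, ∀ b, G.Adj a b → b ∈ S) {a b : V}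
    (p : G.Walk a b) (ha : a ∈ S) : b ∈ S := by
  induction p with
  | nil => exact ha
  | cons h q ih => exact ih (hS _ ha _ h)

lemma deg_one_unique {v a b : V} (hv : G.degree v = 1) (ha : G.Adj v a) (hb : G.Adj v b) :
    a = b := by
  have h1 : (G.neighborFinset v).card ≤ 1 := le_of_eq hv
  exact Finset.card_le_one.1 h1 a ((G.mem_neighborFinset v a).2 ha)
    b ((G.mem_neighborFinset v b).2 hb)

lemma no_leaf_leaf (hc : G.Connected) {u v r : V} (h : G.Adj u v) (hu : G.degree u = 1)
    (hv : G.degree v = 1) (hr : G.degree r = 3) : False := by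
  have hS : ∀ a ∈ ({u, v} : Set V), ∀ b, G.Adj a b → b ∈ ({u, v} : Set V) := by
    rintro a (rfl | rfl) b hab
    · exact Or.inr (deg_one_unique hu hab h)
    · exact Or.inl (deg_one_unique hv hab h.symm)
  obtain ⟨p⟩ := hc.preconnected u r
  have := walk_closed hS p (Or.inl rfl)
  rcases this with rfl | rfl <;> omega

lemma dist_adj_ne (hT : G.IsTree) (r : V) {u v : V} (h : G.Adj u v) :
    G.dist u r ≠ G.dist v r := by
  intro heq
  have hc := hT.isConnected
  obtain ⟨p, hp⟩ := hc.exists_walk_length_eq_dist u r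
  have hpath : p.IsPath := p.isPath_of_length_eq_dist hp
  by_cases h0 : G.dist u r = 0
  · have hu : u = r := (hc.dist_eq_zero_iff).1 h0
    have hv : v = r := (hc.dist_eq_zero_iff).1 (heq ▸ h0)
    exact h.ne (hu.trans hv.symm)
  · have hvp : v ∉ p.support := by
      intro hv
      have h1 := congrArg Walk.length (p.take_spec hv)
      rw [Walk.length_append] at h1
      have h2 : G.dist v r ≤ (p.dropUntil v hv).length := dist_le _
      have h3 : (p.takeUntil v hv).length ≠ 0 := fun hz =>
        h.ne (Walk.eq_of_length_eq_zero hz)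
      omega
    have hq : (Walk.cons h.symm p).IsPath := hpath.cons hvp
    obtain ⟨p', hp'⟩ := hc.exists_walk_length_eq_dist v r
    have hp'path : p'.IsPath := p'.isPath_of_length_eq_dist hp'
    have heq2 := (hT.existsUnique_path v r).unique hq hp'path
    have := congrArg Walk.length heq2
    simp only [Walk.length_cons] at this
    omega

lemma parent_unique (hT : G.IsTree) (r : V) {v u w : V} (huv : G.Adj v u) (hwv : G.Adj v w)
    (hu : G.dist u r + 1 = G.dist v r) (hw : G.dist w r + 1 = G.dist v r) : u = w := by
  have hc := hT.isConnected
  obtain ⟨pu, hpu⟩ := hc.exists_walk_length_eq_dist u r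
  obtain ⟨pw, hpw⟩ := hc.exists_walk_length_eq_dist w r
  have hvpu : v ∉ pu.support := fun hv => by
    have h2 : G.dist v r ≤ (pu.dropUntil v hv).length := dist_le _
    have h3 := Walk.length_dropUntil_le pu hv
    omega
  have hvpw : v ∉ pw.support := fun hv => by
    have h2 : G.dist v r ≤ (pw.dropUntil v hv).length := dist_le _
    have h3 := Walk.length_dropUntil_le pw hv
    omega
  have hq : (Walk.cons huv pu).IsPath := (pu.isPath_of_length_eq_dist hpu).cons hvpu
  have hq' : (Walk.cons hwv pw).IsPath := (pw.isPath_of_length_eq_dist hpw).cons hvpw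
  have heq := (hT.existsUnique_path v r).unique hq hq'
  have h5 := congrArg (fun q : G.Walk v r => q.getVert 1) heq
  simpa using h5

lemma exists_parent (hT : G.IsTree) (r v : V) (hv : v ≠ r) :
    ∃ u, G.Adj v u ∧ G.dist u r + 1 = G.dist v r := by
  have hc := hT.isConnected
  obtain ⟨p, hp⟩ := hc.exists_walk_length_eq_dist v r
  have hd : 0 < G.dist v r := hc.pos_dist_of_ne hv
  have hnil : ¬ p.Nil := by rw [Walk.nil_iff_length_eq]; omega
  refine ⟨p.getVert 1, p.adj_snd hnil, ?_⟩
  have h1 : G.dist (p.getVert 1) r ≤ p.tail.length := dist_le _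
  have h2 := Walk.length_tail_add_one hnil
  have h3 : G.dist v r ≤ G.dist v (p.getVert 1) + G.dist (p.getVert 1) r :=
    hc.dist_triangle
  have h4 : G.dist v (p.getVert 1) = 1 := (dist_eq_one_iff_adj).2 (p.adj_snd hnil)
  omega

lemma card_33_le (hT : G.IsTree) {r : V} (hr : G.degree r = 3) :
    (G.edgeFinset.filter fun e => ∀ v ∈ e, G.degree v = 3).card + 1 ≤
      (univ.filter fun v : V => G.degree v = 3).card := by
  classical
  have hrS : r ∈ univ.filter fun v : V => G.degree v = 3 := by simp [hr]
  rw [← Finset.card_erase_add_one hrS]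
  have hc := hT.isConnected
  set par : V → V := fun v => if h : v ≠ r then (exists_parent hT r v h).choose else v with hpar
  have hparAdj : ∀ v, v ≠ r → G.Adj v (par v) ∧ G.dist (par v) r + 1 = G.dist v r := by
    intro v hv
    simp only [hpar, dif_pos hv]
    exact (exists_parent hT r v hv).choose_spec
  set φ : V → Sym2 V := fun v => s(v, par v) with hφ
  have key : ∀ a b : V, G.Adj a b → G.degree a = 3 → G.degree b = 3 →
      G.dist a r + 1 = G.dist b r →
      ∃ v ∈ (univ.filter fun v : V => G.degree v = 3).erase r, φ v = s(a, b) := by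
    intro a b hab hda hdb hd
    have hbr : b ≠ r := by
      intro h; subst h
      rw [SimpleGraph.dist_self] at hd; omega
    obtain ⟨hadj, hdist⟩ := hparAdj b hbr
    have : par b = a := parent_unique hT r hadj hab.symm hdist hd
    refine ⟨b, ?_, ?_⟩
    · simp [Finset.mem_erase, hbr, hdb]
    · rw [hφ]; simp only [this]; exact Sym2.eq_swap
  apply Nat.add_le_add_right
  apply Finset.card_le_card_of_surjOn φ
  intro e he
  simp only [Finset.coe_filter, Set.mem_setOf_eq, SimpleGraph.mem_edgeFinset] at he
  obtain ⟨he1, he2⟩ := he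
  induction e using Sym2.ind with
  | _ a b =>
    rw [SimpleGraph.mem_edgeSet] at he1
    have hda : G.degree a = 3 := he2 a (Sym2.mem_mk_left a b)
    have hdb : G.degree b = 3 := he2 b (Sym2.mem_mk_right a b)
    have hne := dist_adj_ne hT r he1
    have t1 : G.dist a r ≤ G.dist b r + 1 := by
      have := hc.dist_triangle (u := a) (v := b) (w := r)
      rw [dist_eq_one_iff_adj.2 he1] at this; omega
    have t2 : G.dist b r ≤ G.dist a r + 1 := by
      have := hc.dist_triangle (u := b) (v := a) (w := r)
      rw [dist_eq_one_iff_adj.2 he1.symm] at this; omega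
    rcases lt_or_gt_of_ne hne with hlt | hgt
    · obtain ⟨v, hv1, hv2⟩ := key a b he1 hda hdb (by omega)
      exact ⟨v, by simp at hv1 ⊢; tauto, hv2⟩
    · obtain ⟨v, hv1, hv2⟩ := key b a he1.symm hdb hda (by omega)
      exact ⟨v, by simp at hv1 ⊢; tauto, hv2.trans Sym2.eq_swap⟩

lemma count_eq (x : ℕ) (hx : (univ.filter fun v : V => G.degree v = 3).card = x) :
    3 * x = 2 * (G.edgeFinset.filter fun e => ∀ v ∈ e, G.degree v = 3).card
      + (G.edgeFinset.filter fun e =>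
          (∃ v ∈ e, G.degree v = 3) ∧ ¬ ∀ v ∈ e, G.degree v = 3).card := by
  classical
  set D := univ.filter (fun d : G.Dart => G.degree d.fst = 3) with hD
  have step1 : D.card = 3 * x := by
    rw [Finset.card_eq_sum_card_fiberwise
      (f := fun d : G.Dart => d.fst) (t := univ.filter fun v : V => G.degree v = 3)
      (fun d hd => by simp only [hD, Finset.mem_coe, Finset.mem_filter] at hd ⊢; exact ⟨Finset.mem_univ _, hd.2⟩)]
    rw [← hx, Finset.sum_congr rfl (fun v hv => ?_), Finset.sum_const, smul_eq_mul, mul_comm]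
    have hfib : D.filter (fun d => d.fst = v) = univ.filter (fun d : G.Dart => d.fst = v) := by
      ext d
      simp only [hD, Finset.mem_filter, Finset.mem_univ, true_and]
      constructor
      · exact fun h => h.2
      · intro h
        refine ⟨?_, h⟩
        rw [h]
        simpa using hv
    rw [hfib]
    have := G.dart_fst_fiber_card_eq_degree v
    simp only [Finset.mem_filter] at hv
    convert this using 2 <;> try rw [hv.2]
  have step2 : D.card =
      2 * (G.edgeFinset.filter fun e => ∀ v ∈ e, G.degree v = 3).card
      + (G.edgeFinset.filter fun e =>
          (∃ v ∈ e, G.degree v = 3) ∧ ¬ ∀ v ∈ e, G.degree v = 3).card := by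
    rw [Finset.card_eq_sum_card_fiberwise
      (f := fun d : G.Dart => d.edge) (t := G.edgeFinset)
      (fun d hd => by simpa using d.edge_mem)]
    have per : ∀ e ∈ G.edgeFinset, (D.filter (fun d => d.edge = e)).card =
        (if (∀ v ∈ e, G.degree v = 3) then 2 else 0)
        + (if ((∃ v ∈ e, G.degree v = 3) ∧ ¬ ∀ v ∈ e, G.degree v = 3) then 1 else 0) := by
      intro e he
      induction e using Sym2.ind with
      | _ a b =>
        rw [SimpleGraph.mem_edgeFinset, SimpleGraph.mem_edgeSet] at he
        set d0 : G.Dart := ⟨(a, b), he⟩ with hd0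
        have hfib : D.filter (fun d => d.edge = s(a, b)) =
            ({d0, d0.symm} : Finset G.Dart).filter (fun d => G.degree d.fst = 3) := by
          have h1 := d0.edge_fiber
          have h2 : d0.edge = s(a, b) := rfl
          rw [h2] at h1
          rw [hD, Finset.filter_comm]
          congr 1
        have hne : d0 ≠ d0.symm := by
          intro h
          have : a = b := congrArg (fun d : G.Dart => d.fst) h
          exact he.ne this
        have hfsts : d0.symm.fst = b := rfl
        have hfst : d0.fst = a := rfl
        rw [hfib]
        have hmem : ∀ z : V, z ∈ s(a, b) ↔ z = a ∨ z = b := fun z => Sym2.mem_iff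
        by_cases h3a : G.degree a = 3 <;> by_cases h3b : G.degree b = 3 <;>
          simp [Finset.filter_insert, Finset.filter_singleton, hfst, hfsts, h3a, h3b, hne,
            Sym2.mem_iff, Finset.card_insert_of_notMem] <;> rw [hfst, hfsts] <;>
            simp [h3a, h3b, hne, Finset.card_insert_of_notMem] <;> tauto
    rw [Finset.sum_congr rfl per, Finset.sum_add_distrib]
    congr 1
    · rw [← Finset.sum_filter, Finset.sum_const, smul_eq_mul, mul_comm]
    · rw [← Finset.sum_filter, Finset.sum_const, smul_eq_mul, mul_one]
  omega

lemma deg_one_unique' {v a b : V} (hv : G.degree v = 1) (ha : G.Adj v a) (hb : G.Adj v b) :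
    a = b := by
  have h1 : (G.neighborFinset v).card ≤ 1 := le_of_eq ((G.card_neighborFinset_eq_degree v).trans hv)
  exact Finset.card_le_one.1 h1 a ((G.mem_neighborFinset v a).2 ha)
    b ((G.mem_neighborFinset v b).2 hb)


lemma leaf_edge_count (hT : G.IsTree) {r : V} (hr : G.degree r = 3) :
    (G.edgeFinset.filter fun e => ∃ v ∈ e, G.degree v = 1).card
      = (univ.filter fun v : V => G.degree v = 1).card := by
  classical
  have hc := hT.isConnected
  have exnb : ∀ v ∈ univ.filter (fun v : V => G.degree v = 1), ∃ u, G.Adj v u := by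
    intro v hv
    simp only [Finset.mem_filter] at hv
    have hpos : 0 < (G.neighborFinset v).card := by
      rw [G.card_neighborFinset_eq_degree v, hv.2]; omega
    obtain ⟨u, hu⟩ := Finset.card_pos.1 hpos
    exact ⟨u, (G.mem_neighborFinset v u).1 hu⟩
  choose nb hnb using exnb
  refine (Finset.card_bij (fun v hv => s(v, nb v hv)) ?_ ?_ ?_).symm
  · intro v hv
    have hadj := hnb v hv
    simp only [Finset.mem_filter, SimpleGraph.mem_edgeFinset, SimpleGraph.mem_edgeSet]
    refine ⟨hadj, v, Sym2.mem_mk_left _ _, ?_⟩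
    exact (Finset.mem_filter.1 hv).2
  · intro a₁ ha₁ a₂ ha₂ heq
    rw [Sym2.eq_iff] at heq
    rcases heq with ⟨h1, _⟩ | ⟨h1, h2⟩
    · exact h1
    · exfalso
      have hadj2 := hnb a₂ ha₂
      rw [← h1] at hadj2
      exact no_leaf_leaf hc hadj2.symm (Finset.mem_filter.1 ha₁).2
        (Finset.mem_filter.1 ha₂).2 hr
  · intro e he
    induction e using Sym2.ind with
    | _ a b =>
      simp only [Finset.mem_filter, SimpleGraph.mem_edgeFinset, SimpleGraph.mem_edgeSet] at he
      obtain ⟨hab, w, hw, hw1⟩ := he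
      rw [Sym2.mem_iff] at hw
      have main : ∀ a b : V, G.Adj a b → G.degree a = 1 →
          ∃ v hv, s(v, nb v hv) = s(a, b) := by
        intro a b hab ha1
        have hvmem : a ∈ univ.filter (fun v : V => G.degree v = 1) := by simp [ha1]
        refine ⟨a, hvmem, ?_⟩
        have : nb a hvmem = b := deg_one_unique' ha1 (hnb a hvmem) hab
        rw [this]
      rcases hw with rfl | rfl
      · exact main _ _ hab hw1
      · obtain ⟨v, hv, hveq⟩ := main _ _ hab.symm hw1
        exact ⟨v, hv, hveq.trans Sym2.eq_swap⟩

lemma edge_bound (hT : G.IsTree) {r : V} (hr : G.degree r = 3)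
    (hdeg : ∀ v : V, G.degree v ∈ ({1, 2, 3} : Set ℕ)) {e : Sym2 V} (he : e ∈ G.edgeFinset) :
    Sym2.lift ⟨fun u v => ((G.degree u : ℤ) - (G.degree v : ℤ)) ^ 2,
      fun u v => by simp only []; ring⟩ e
      ≥ (if (∃ v ∈ e, G.degree v = 1) then (1:ℤ) else 0)
        + (if ((∃ v ∈ e, G.degree v = 3) ∧ ¬ ∀ v ∈ e, G.degree v = 3) then (1:ℤ) else 0) := by
  induction e using Sym2.ind with
  | _ a b =>
    rw [SimpleGraph.mem_edgeFinset, SimpleGraph.mem_edgeSet] at he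
    rw [Sym2.lift_mk]
    have hda := hdeg a; have hdb := hdeg b
    simp only [Set.mem_insert_iff, Set.mem_singleton_iff] at hda hdb
    have hnoll : ¬ (G.degree a = 1 ∧ G.degree b = 1) := fun h =>
      no_leaf_leaf hT.isConnected he h.1 h.2 hr
    rcases hda with h1 | h1 | h1 <;> rcases hdb with h2 | h2 | h2 <;>
      simp only [h1, h2, Sym2.mem_iff] <;>
      norm_num <;>
      simp [h1, h2] <;> omega

end AuxStmt17

/-- For a tree with all degrees in `{1,2,3}` and exactly `x ≥ 1` vertices of degree `3`
(hence `x + 2` leaves), `σ(T) ≥ 2(x+2)`. -/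
theorem stmt17 {V : Type*} [Fintype V] (G : SimpleGraph V) (hT : G.IsTree)
    (hdeg : ∀ v : V, G.degree v ∈ ({1, 2, 3} : Set ℕ)) (x : ℕ) (hx1 : 1 ≤ x)
    (hx : (Finset.univ.filter fun v : V => G.degree v = 3).card = x)
    (hleaf : (Finset.univ.filter fun v : V => G.degree v = 1).card = x + 2) :
    sigmaE G ≥ 2 * ((x : ℤ) + 2) := by
  classical
  have hS3 : (Finset.univ.filter fun v : V => G.degree v = 3).Nonempty := by
    rw [← Finset.card_pos, hx]; omega
  obtain ⟨r, hrmem⟩ := hS3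
  have hr : G.degree r = 3 := (Finset.mem_filter.1 hrmem).2
  have hC := count_eq (G := G) x hx
  have hA := card_33_le hT hr
  rw [hx] at hA
  have hL1 := leaf_edge_count hT hr
  rw [hleaf] at hL1
  have hsum : ∑ e ∈ G.edgeFinset,
      ((if (∃ v ∈ e, G.degree v = 1) then (1:ℤ) else 0)
       + (if ((∃ v ∈ e, G.degree v = 3) ∧ ¬ ∀ v ∈ e, G.degree v = 3) then (1:ℤ) else 0))
      ≤ sigmaE G := by
    unfold sigmaE
    exact Finset.sum_le_sum fun e he => edge_bound hT hr hdeg he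
  rw [Finset.sum_add_distrib, Finset.sum_boole, Finset.sum_boole, hL1] at hsum
  have hm : x + 2 ≤ (G.edgeFinset.filter fun e =>
      (∃ v ∈ e, G.degree v = 3) ∧ ¬ ∀ v ∈ e, G.degree v = 3).card := by omega
  have hm' : ((x:ℤ) + 2) ≤ ((G.edgeFinset.filter fun e =>
      (∃ v ∈ e, G.degree v = 3) ∧ ¬ ∀ v ∈ e, G.degree v = 3).card : ℤ) := by
    exact_mod_cast hm
  push_cast at hsum
  linarith [hsum]
end

section
/- Let T be a tree all of whose vertex degrees lie in {1, 2, 3}, with exactly x ≥ 1 vertices of degree 3 and y vertices of degree 2, and suppose y ≤ x + 2. Then σ(T) ≥ 4(x + 2) − 2y. -/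
open Finset
open scoped Classical

section MyAux
variable {V : Type*} [Fintype V] {G : SimpleGraph V}

omit [Fintype V] in
lemma myWalkClosed {S : Set V} (hS : ∀ a ∈ S, ∀ b, G.Adj a b → b ∈ S)
    {a c : V} (p : G.Walk a c) (ha : a ∈ S) : c ∈ S := by
  induction p with
  | nil => exact ha
  | cons h q ih => exact ih (hS _ ha _ h)

lemma myDegOneAdj {a b : V} (h1 : G.degree a = 1) (hab : G.Adj a b) :
    ∀ c, G.Adj a c → c = b := by
  intro c hc
  have hb : b ∈ G.neighborFinset a := by simpa using hab
  have hc' : c ∈ G.neighborFinset a := by simpa using hc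
  have hle : (G.neighborFinset a).card ≤ 1 := by
    rw [G.card_neighborFinset_eq_degree, h1]
  exact Finset.card_le_one.mp hle c hc' b hb

lemma myDegTwoAdj {u l w : V} (h2 : G.degree u = 2) (hl : G.Adj u l) (hw : G.Adj u w)
    (hlw : l ≠ w) : ∀ c, G.Adj u c → c = l ∨ c = w := by
  intro c hc
  have hsub : ({l, w} : Finset V) ⊆ G.neighborFinset u := by
    intro a ha
    rcases Finset.mem_insert.mp ha with rfl | ha
    · simpa using hl
    · simp only [Finset.mem_singleton] at ha; subst ha; simpa using hw
  have hcard : (G.neighborFinset u).card ≤ ({l, w} : Finset V).card := by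
    rw [G.card_neighborFinset_eq_degree, h2, Finset.card_pair hlw]
  have heq := Finset.eq_of_subset_of_card_le hsub hcard
  have : c ∈ ({l, w} : Finset V) := by rw [heq]; simpa using hc
  simpa using this

lemma myDegTwoOther {u l : V} (h2 : G.degree u = 2) (hl : G.Adj u l) :
    ∃ w, G.Adj u w ∧ w ≠ l := by
  by_contra h
  push_neg at h
  have hsub : G.neighborFinset u ⊆ {l} := by
    intro a ha
    simp only [Finset.mem_singleton]
    exact h a (by simpa using ha)
  have := Finset.card_le_card hsub
  rw [G.card_neighborFinset_eq_degree, h2, Finset.card_singleton] at this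
  omega

omit [Fintype V] in
lemma myCardFilterPair (S : Finset V) {u v : V} (huv : u ≠ v) :
    (S.filter (fun a => a ∈ (s(u, v) : Sym2 V))).card
      = (if u ∈ S then 1 else 0) + (if v ∈ S then 1 else 0) := by
  have h : S.filter (fun a => a ∈ (s(u, v) : Sym2 V)) = S.filter (fun a => a = u ∨ a = v) := by
    apply Finset.filter_congr
    intro a _
    simp [Sym2.mem_iff]
  have key : ∀ t : V, S.filter (fun a => a = t) = if t ∈ S then {t} else ∅ := by
    intro t
    split_ifs with ht <;> ext a <;> simp only [Finset.mem_filter, Finset.mem_singleton,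
      Finset.notMem_empty, iff_false, not_and] <;> aesop
  rw [h, Finset.filter_or, key u, key v]
  by_cases h1 : u ∈ S <;> by_cases h2 : v ∈ S <;>
    simp [h1, h2, Finset.card_union_of_disjoint, huv, Finset.disjoint_singleton_right,
      Finset.card_insert_of_notMem, ← Finset.insert_eq, Finset.card_pair]

lemma mySumDegSwap (S : Finset V) :
    ∑ v ∈ S, G.degree v = ∑ e ∈ G.edgeFinset, (S.filter (fun v => v ∈ e)).card := by
  have h1 : ∀ v : V, G.degree v = (G.edgeFinset.filter (fun e => v ∈ e)).card := by
    intro v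
    rw [← SimpleGraph.card_incidenceFinset_eq_degree, SimpleGraph.incidenceFinset_eq_filter]
  calc ∑ v ∈ S, G.degree v
      = ∑ v ∈ S, ∑ e ∈ G.edgeFinset, (if v ∈ e then 1 else 0) := by
        refine Finset.sum_congr rfl fun v _ => ?_
        rw [h1 v, Finset.card_filter]
    _ = ∑ e ∈ G.edgeFinset, ∑ v ∈ S, (if v ∈ e then 1 else 0) := Finset.sum_comm
    _ = _ := by
        refine Finset.sum_congr rfl fun e _ => ?_
        rw [Finset.card_filter]

/-- Product of endpoint degrees, as a `Sym2` invariant. -/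
noncomputable def pdeg (G : SimpleGraph V) : Sym2 V → ℕ :=
  Sym2.lift ⟨fun a b => G.degree a * G.degree b, fun a b => Nat.mul_comm _ _⟩

lemma pdeg_mk (a b : V) : pdeg G s(a, b) = G.degree a * G.degree b := rfl

end MyAux

/-- For a tree with all degrees in `{1,2,3}`, exactly `x ≥ 1` vertices of degree `3` and `y`
vertices of degree `2`, with `y ≤ x + 2`, one has `σ(T) ≥ 4(x+2) - 2y`. -/
theorem stmt18 {V : Type*} [Fintype V] (G : SimpleGraph V) (hT : G.IsTree)
    (hdeg : ∀ v : V, G.degree v ∈ ({1, 2, 3} : Set ℕ)) (x y : ℕ) (hx1 : 1 ≤ x)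
    (hx : (Finset.univ.filter fun v : V => G.degree v = 3).card = x)
    (hy : (Finset.univ.filter fun v : V => G.degree v = 2).card = y)
    (hyx : y ≤ x + 2) :
    sigmaE G ≥ 4 * ((x : ℤ) + 2) - 2 * (y : ℤ) := by
  obtain ⟨v3, hv3⟩ : ∃ v : V, G.degree v = 3 := by
    have h : (Finset.univ.filter fun v : V => G.degree v = 3).Nonempty :=
      Finset.card_pos.mp (by rw [hx]; omega)
    obtain ⟨v, hv⟩ := h
    exact ⟨v, (Finset.mem_filter.mp hv).2⟩
  have hpre : G.Preconnected := hT.isConnected.preconnected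
  -- contradiction tool : no closed set of small-degree vertices
  have trap : ∀ (S : Set V) (a : V), a ∈ S → (∀ b ∈ S, ∀ c, G.Adj b c → c ∈ S) →
      (∀ b ∈ S, G.degree b ≤ 2) → False := by
    intro S a haS hcl hd
    obtain ⟨w⟩ := hpre a v3
    have hmem : v3 ∈ S := myWalkClosed hcl w haS
    have := hd v3 hmem
    omega
  have edge_cases : ∀ e ∈ G.edgeFinset, ∃ a b, G.Adj a b ∧ e = s(a, b) := by
    intro e he
    induction e with
    | _ a b => exact ⟨a, b, by simpa using he, rfl⟩
  -- no edge joins two leaves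
  have hno1 : ∀ e ∈ G.edgeFinset, pdeg G e ≠ 1 := by
    intro e he h1
    obtain ⟨a, b, hab, rfl⟩ := edge_cases e he
    rw [pdeg_mk] at h1
    obtain ⟨hda, hdb⟩ : G.degree a = 1 ∧ G.degree b = 1 := by
      have ha := hdeg a; have hb := hdeg b
      simp only [Set.mem_insert_iff, Set.mem_singleton_iff] at ha hb
      rcases ha with h | h | h <;> rcases hb with h' | h' | h' <;>
        first
          | exact ⟨h, h'⟩
          | (rw [h, h'] at h1; norm_num at h1)
    refine trap {a, b} a (by simp) ?_ ?_
    · intro c hc d hd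
      rcases hc with rfl | hc
      · exact Or.inr (myDegOneAdj hda hab d hd)
      · simp only [Set.mem_singleton_iff] at hc; subst hc
        exact Or.inl (myDegOneAdj hdb hab.symm d hd)
    · intro c hc
      rcases hc with rfl | hc
      · omega
      · simp only [Set.mem_singleton_iff] at hc; subst hc; omega
  -- per-edge classification
  have key : ∀ e ∈ G.edgeFinset,
      (Sym2.lift ⟨fun u v => ((G.degree u : ℤ) - (G.degree v : ℤ)) ^ 2,
        fun u v => by simp only []; ring⟩ e
        = (if pdeg G e = 2 then (1 : ℤ) else 0) + (if pdeg G e = 3 then 4 else 0)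
          + (if pdeg G e = 6 then 1 else 0))
      ∧ ((Finset.univ.filter fun v : V => G.degree v = 1).filter (fun v => v ∈ e)).card
          = (if pdeg G e = 2 then 1 else 0) + (if pdeg G e = 3 then 1 else 0)
      ∧ ((Finset.univ.filter fun v : V => G.degree v = 2).filter (fun v => v ∈ e)).card
          = (if pdeg G e = 4 then 2 else 0) + (if pdeg G e = 2 then 1 else 0)
            + (if pdeg G e = 6 then 1 else 0) := by
    intro e he
    obtain ⟨a, b, hab, rfl⟩ := edge_cases e he
    have hne : a ≠ b := hab.ne
    have hc1 := myCardFilterPair (Finset.univ.filter fun v : V => G.degree v = 1) hne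
    have hc2 := myCardFilterPair (Finset.univ.filter fun v : V => G.degree v = 2) hne
    have hp1 := hno1 _ he
    have ha := hdeg a; have hb := hdeg b
    simp only [Set.mem_insert_iff, Set.mem_singleton_iff] at ha hb
    rw [pdeg_mk] at hp1 ⊢
    rw [hc1, hc2, Sym2.lift_mk]
    rcases ha with ha | ha | ha <;> rcases hb with hb | hb | hb <;>
      simp [ha, hb] at hp1 ⊢ <;> norm_num
  set A := (G.edgeFinset.filter fun e => pdeg G e = 2).card with hA
  set B := (G.edgeFinset.filter fun e => pdeg G e = 3).card with hB
  set C := (G.edgeFinset.filter fun e => pdeg G e = 6).card with hC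
  set D := (G.edgeFinset.filter fun e => pdeg G e = 4).card with hD
  set z := (Finset.univ.filter fun v : V => G.degree v = 1).card with hzdef
  -- σ in terms of edge-type counts
  have hsig : sigmaE G = (A : ℤ) + 4 * B + C := by
    rw [sigmaE]
    rw [Finset.sum_congr rfl fun e he => (key e he).1]
    rw [Finset.sum_add_distrib, Finset.sum_add_distrib, Finset.sum_boole, Finset.sum_boole]
    have h4 : ∀ e ∈ G.edgeFinset, (if pdeg G e = 3 then (4 : ℤ) else 0)
        = 4 * (if pdeg G e = 3 then 1 else 0) := by
      intro e _; split <;> ring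
    rw [Finset.sum_congr rfl h4, ← Finset.mul_sum, Finset.sum_boole]
  -- leaf count in terms of edge-type counts
  have hzc : z = A + B := by
    have h1 : ∑ v ∈ (Finset.univ.filter fun v : V => G.degree v = 1), G.degree v = z := by
      rw [Finset.sum_congr rfl fun v hv => (Finset.mem_filter.mp hv).2, Finset.sum_const,
        smul_eq_mul, mul_one]
    rw [← h1, mySumDegSwap, Finset.sum_congr rfl fun e he => (key e he).2.1,
      Finset.sum_add_distrib, ← Finset.card_filter, ← Finset.card_filter]
  -- degree-2 count in terms of edge-type counts
  have hyc : 2 * y = 2 * D + A + C := by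
    have h1 : ∑ v ∈ (Finset.univ.filter fun v : V => G.degree v = 2), G.degree v = 2 * y := by
      rw [Finset.sum_congr rfl fun v hv => (Finset.mem_filter.mp hv).2, Finset.sum_const,
        smul_eq_mul, hy, mul_comm]
    have h2 : ∀ e ∈ G.edgeFinset, (if pdeg G e = 4 then 2 else 0)
        + (if pdeg G e = 2 then 1 else 0) + (if pdeg G e = 6 then 1 else 0)
        = 2 * (if pdeg G e = 4 then 1 else 0)
        + ((if pdeg G e = 2 then 1 else 0) + (if pdeg G e = 6 then 1 else 0)) := by
      intro e _; split <;> split <;> split <;> ring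
    rw [← h1, mySumDegSwap, Finset.sum_congr rfl fun e he => (key e he).2.2,
      Finset.sum_congr rfl h2, Finset.sum_add_distrib, Finset.sum_add_distrib,
      ← Finset.mul_sum, ← Finset.card_filter, ← Finset.card_filter, ← Finset.card_filter]
    ring
  -- the injection : A ≤ D + C
  have struct : ∀ e ∈ G.edgeFinset.filter (fun e => pdeg G e = 2), ∀ u ∈ e, G.degree u = 2 →
      ∃ l, G.degree l = 1 ∧ G.Adj u l ∧ e = s(u, l) := by
    intro e he u hu hdu
    obtain ⟨a, b, hab, rfl⟩ := edge_cases e (Finset.filter_subset _ _ he)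
    have hp : G.degree a * G.degree b = 2 := by
      have := (Finset.mem_filter.mp he).2; rwa [pdeg_mk] at this
    have hcases : (G.degree a = 1 ∧ G.degree b = 2) ∨ (G.degree a = 2 ∧ G.degree b = 1) := by
      have ha := hdeg a; have hb := hdeg b
      simp only [Set.mem_insert_iff, Set.mem_singleton_iff] at ha hb
      rcases ha with h | h | h <;> rcases hb with h' | h' | h' <;> rw [h, h'] at hp <;>
        first
          | (left; exact ⟨h, h'⟩)
          | (right; exact ⟨h, h'⟩)
          | norm_num at hp
    have hu' : u = a ∨ u = b := Sym2.mem_iff.mp hu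
    rcases hcases with ⟨h1, h2⟩ | ⟨h1, h2⟩
    · have hub : u = b := by rcases hu' with rfl | rfl <;> first | rfl | omega
      subst hub
      exact ⟨a, h1, hab.symm, Sym2.eq_swap.symm⟩
    · have hua : u = a := by rcases hu' with rfl | rfl <;> first | rfl | omega
      subst hua
      exact ⟨b, h2, hab, rfl⟩
  have hex : ∀ e : Sym2 V, ∃ t : V × V, e ∈ G.edgeFinset.filter (fun e => pdeg G e = 2) →
      (G.Adj t.1 t.2 ∧ G.degree t.1 = 2 ∧ t.1 ∈ e ∧ ¬ t.2 ∈ e) := by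
    intro e
    by_cases he : e ∈ G.edgeFinset.filter (fun e => pdeg G e = 2)
    · obtain ⟨a, b, hab, heab⟩ := edge_cases e (Finset.filter_subset _ _ he)
      have hu : a ∈ e ∨ b ∈ e := by rw [heab]; left; simp
      have h2 : ∃ u ∈ e, G.degree u = 2 := by
        have hp : G.degree a * G.degree b = 2 := by
          have := (Finset.mem_filter.mp he).2; rw [heab, pdeg_mk] at this; exact this
        have ha := hdeg a; have hb := hdeg b
        simp only [Set.mem_insert_iff, Set.mem_singleton_iff] at ha hb
        rcases ha with h | h | h <;> rcases hb with h' | h' | h' <;> rw [h, h'] at hp <;>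
          first
            | exact ⟨a, by rw [heab]; simp, h⟩
            | exact ⟨b, by rw [heab]; simp, h'⟩
            | norm_num at hp
      obtain ⟨u, hue, hdu⟩ := h2
      obtain ⟨l, hl1, hul, hel⟩ := struct e he u hue hdu
      obtain ⟨w, huw, hwl⟩ := myDegTwoOther hdu hul
      refine ⟨(u, w), fun _ => ⟨huw, hdu, hue, ?_⟩⟩
      rw [hel, Sym2.mem_iff]
      push_neg
      exact ⟨fun h => (G.ne_of_adj huw) h.symm, hwl⟩
    · exact ⟨(v3, v3), fun h => absurd h he⟩
  choose t ht using hex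
  have hw2 : ∀ e ∈ G.edgeFinset.filter (fun e => pdeg G e = 2), G.degree (t e).2 ≠ 1 := by
    intro e he h1
    obtain ⟨hadj, hd2, hmem, hnmem⟩ := ht e he
    obtain ⟨l, hl1, hul, hel⟩ := struct e he (t e).1 hmem hd2
    have hlmem : l ∈ e := by rw [hel]; simp
    have hlw : l ≠ (t e).2 := fun h => hnmem (h ▸ hlmem)
    refine trap {l, (t e).1, (t e).2} (t e).1 (by simp) ?_ ?_
    · intro b hb c hc
      rcases hb with rfl | rfl | rfl
      · exact Or.inr (Or.inl (myDegOneAdj hl1 hul.symm c hc))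
      · rcases myDegTwoAdj hd2 hul hadj hlw c hc with h | h
        · exact Or.inl h
        · exact Or.inr (Or.inr h)
      · exact Or.inr (Or.inl (myDegOneAdj h1 hadj.symm c hc))
    · intro b hb
      rcases hb with rfl | rfl | rfl <;> omega
  have hmapsto : ∀ e ∈ G.edgeFinset.filter (fun e => pdeg G e = 2),
      s((t e).1, (t e).2) ∈ G.edgeFinset.filter (fun e => pdeg G e = 4 ∨ pdeg G e = 6) := by
    intro e he
    obtain ⟨hadj, hd2, hmem, hnmem⟩ := ht e he
    refine Finset.mem_filter.mpr ⟨SimpleGraph.mem_edgeFinset.mpr hadj, ?_⟩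
    rw [pdeg_mk, hd2]
    have h2 := hw2 e he
    have hb := hdeg (t e).2
    simp only [Set.mem_insert_iff, Set.mem_singleton_iff] at hb
    rcases hb with h | h | h
    · exact absurd h h2
    · left; rw [h]
    · right; rw [h]
  have hcardle : A ≤ (G.edgeFinset.filter fun e => pdeg G e = 4 ∨ pdeg G e = 6).card := by
    rw [hA]
    apply Finset.card_le_card_of_injOn (fun e => s((t e).1, (t e).2)) hmapsto
    intro e he' e' he'' heq
    have he : e ∈ G.edgeFinset.filter (fun e => pdeg G e = 2) := he'
    have he2 : e' ∈ G.edgeFinset.filter (fun e => pdeg G e = 2) := he''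
    obtain ⟨hadj, hd2, hmem, hnmem⟩ := ht e he
    obtain ⟨hadj', hd2', hmem', hnmem'⟩ := ht e' he2
    obtain ⟨l, hl1, hul, hel⟩ := struct e he (t e).1 hmem hd2
    obtain ⟨l', hl1', hul', hel'⟩ := struct e' he2 (t e').1 hmem' hd2'
    simp only at heq
    rcases Sym2.eq_iff.mp heq with ⟨h1, h2⟩ | ⟨h1, h2⟩
    · -- same u, same w : the leaf is determined
      have hlmem : l ∈ e := by rw [hel]; simp
      have hlmem' : l' ∈ e' := by rw [hel']; simp
      have hlw : l ≠ (t e).2 := fun h => hnmem (h ▸ hlmem)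
      have hlw' : l' ≠ (t e').2 := fun h => hnmem' (h ▸ hlmem')
      have hul2 : G.Adj (t e).1 l' := by rw [h1]; exact hul'
      rcases myDegTwoAdj hd2 hul hadj hlw l' hul2 with h | h
      · rw [hel, hel', ← h1, h]
      · exfalso; rw [h2] at h; exact hlw' h
    · -- crossing case : impossible
      exfalso
      have huu' : G.Adj (t e).1 (t e').1 := by rw [← h2]; exact hadj
      have hlmem : l ∈ e := by rw [hel]; simp
      have hlmem' : l' ∈ e' := by rw [hel']; simp
      have hn2 : ¬ (t e').1 ∈ e := h2 ▸ hnmem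
      have hn1 : ¬ (t e).1 ∈ e' := h1.symm ▸ hnmem'
      have hlu' : l ≠ (t e').1 := fun h => hn2 (h ▸ hlmem)
      have hl'u : l' ≠ (t e).1 := fun h => hn1 (h ▸ hlmem')
      refine trap {l, (t e).1, (t e').1, l'} (t e).1 (by simp) ?_ ?_
      · intro b hb c hc
        rcases hb with rfl | rfl | rfl | rfl
        · exact Or.inr (Or.inl (myDegOneAdj hl1 hul.symm c hc))
        · rcases myDegTwoAdj hd2 hul huu' hlu' c hc with h | h
          · exact Or.inl h
          · exact Or.inr (Or.inr (Or.inl h))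
        · rcases myDegTwoAdj hd2' hul' huu'.symm hl'u c hc with h | h
          · exact Or.inr (Or.inr (Or.inr h))
          · exact Or.inr (Or.inl h)
        · exact Or.inr (Or.inr (Or.inl (myDegOneAdj hl1' hul'.symm c hc)))
      · intro b hb
        rcases hb with rfl | rfl | rfl | rfl <;> omega
  have hinj : A ≤ D + C := by
    have hsp : (G.edgeFinset.filter fun e => pdeg G e = 4 ∨ pdeg G e = 6).card = D + C := by
      rw [Finset.filter_or, Finset.card_union_of_disjoint]
      rw [Finset.disjoint_left]
      intro e h4 h6
      simp only [Finset.mem_filter] at h4 h6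
      omega
    omega
  -- global counting : z = x + 2
  have hzx : z = x + 2 := by
    have hn1 : 1 ≤ Fintype.card V := Fintype.card_pos_iff.mpr ⟨v3⟩
    have hedge : G.edgeFinset.card + 1 = Fintype.card V := hT.card_edgeFinset
    have hsum : ∑ v : V, G.degree v = 2 * G.edgeFinset.card :=
      SimpleGraph.sum_degrees_eq_twice_card_edges G
    have huniv : (Finset.univ : Finset V)
        = ((Finset.univ.filter fun v : V => G.degree v = 1)
            ∪ (Finset.univ.filter fun v : V => G.degree v = 2))
          ∪ (Finset.univ.filter fun v : V => G.degree v = 3) := by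
      ext v
      have hv := hdeg v
      simp only [Set.mem_insert_iff, Set.mem_singleton_iff] at hv
      simp only [Finset.mem_union, Finset.mem_filter, Finset.mem_univ, true_and, true_iff]
      tauto
    have hd12 : Disjoint (Finset.univ.filter fun v : V => G.degree v = 1)
        (Finset.univ.filter fun v : V => G.degree v = 2) := by
      rw [Finset.disjoint_left]
      intro v h1 h2
      simp only [Finset.mem_filter] at h1 h2
      omega
    have hd123 : Disjoint ((Finset.univ.filter fun v : V => G.degree v = 1)
          ∪ (Finset.univ.filter fun v : V => G.degree v = 2))
        (Finset.univ.filter fun v : V => G.degree v = 3) := by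
      rw [Finset.disjoint_left]
      intro v h1 h2
      simp only [Finset.mem_union, Finset.mem_filter] at h1 h2
      omega
    have hcardV : Fintype.card V = z + y + x := by
      rw [← Finset.card_univ, huniv, Finset.card_union_of_disjoint hd123,
        Finset.card_union_of_disjoint hd12, hx, hy]
    have t1 : ∀ i : ℕ, ∑ v ∈ (Finset.univ.filter fun v : V => G.degree v = i), G.degree v
        = i * (Finset.univ.filter fun v : V => G.degree v = i).card := by
      intro i
      rw [Finset.sum_congr rfl fun v hv => (Finset.mem_filter.mp hv).2, Finset.sum_const,
        smul_eq_mul, mul_comm]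
    have hsum2 : ∑ v : V, G.degree v = z + 2 * y + 3 * x := by
      conv_lhs => rw [huniv]
      rw [Finset.sum_union hd123, Finset.sum_union hd12, t1 1, t1 2, t1 3, hx, hy]
      ring
    omega
  -- conclusion
  rw [hsig]
  have : (z : ℤ) = (x : ℤ) + 2 := by exact_mod_cast hzx
  push_cast at hzc hyc ⊢
  omega
end
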